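/- arXiv:1901.05502 — 7 statements merged into one kernel-verified Lean document; each statement's English description precedes it below -/
import Mathlib

section
/- If m and r are both odd, then there is no signed magic rectangle SMR(m,n;r,2). -/
/-- The set of values used by a signed magic rectangle SMR(m,n;r,s):
`{0, ±1, …, ±(ms−1)/2}` if `m*r` is odd, and `{±1, …, ±(m*r/2)}` if `m*r` is even. -/
def SMRvalue (m r s : ℕ) (x : ℤ) : Prop :=
  if m * r % 2 = 1 then |x| ≤ ((m : ℤ) * s - 1) / 2
  else x ≠ 0 ∧ |x| ≤ (m : ℤ) * r / 2

/-- `A` (a partially filled `m × n` integer array) is a signed magic rectangle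
SMR(m,n;r,s): exactly `r` filled cells per row, `s` per column, every value of
the value set appears exactly once, all entries are values, and all row and
column sums are zero. -/
def IsSMR (m n r s : ℕ) (A : Fin m → Fin n → Option ℤ) : Prop :=
  (∀ i, (Finset.univ.filter fun j => (A i j).isSome).card = r) ∧
  (∀ j, (Finset.univ.filter fun i => (A i j).isSome).card = s) ∧
  (∀ i j x, A i j = some x → SMRvalue m r s x) ∧
  (∀ x : ℤ, SMRvalue m r s x → ∃! p : Fin m × Fin n, A p.1 p.2 = some x) ∧
  (∀ i, ∑ j, (A i j).getD 0 = 0) ∧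
  (∀ j, ∑ i, (A i j).getD 0 = 0)

/-- A signed magic rectangle SMR(m,n;r,s) exists. -/
def SMR (m n r s : ℕ) : Prop := ∃ A : Fin m → Fin n → Option ℤ, IsSMR m n r s A

/-- The array has equally many positive and negative entries in every row and
in every column. -/
def IsShiftable (m n : ℕ) (A : Fin m → Fin n → Option ℤ) : Prop :=
  (∀ i, (Finset.univ.filter fun j => 0 < (A i j).getD 0).card =
        (Finset.univ.filter fun j => (A i j).getD 0 < 0).card) ∧
  (∀ j, (Finset.univ.filter fun i => 0 < (A i j).getD 0).card =
        (Finset.univ.filter fun i => (A i j).getD 0 < 0).card)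

/-- A shiftable signed magic rectangle SMR(m,n;r,s) exists. -/
def ShiftableSMR (m n r s : ℕ) : Prop :=
  ∃ A : Fin m → Fin n → Option ℤ, IsSMR m n r s A ∧ IsShiftable m n A

theorem stmt_1 (m n r : ℕ) (hm : Odd m) (hr : Odd r) : ¬ SMR m n r 2 := by
  rintro ⟨A, hrow, hcol, -⟩
  have key : ∑ i : Fin m, (Finset.univ.filter fun j => (A i j).isSome).card
      = ∑ j : Fin n, (Finset.univ.filter fun i => (A i j).isSome).card := by
    simp only [Finset.card_filter]
    exact Finset.sum_comm
  simp only [hrow, hcol, Finset.sum_const, Finset.card_univ, Fintype.card_fin,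
    smul_eq_mul] at key
  have : Odd (m * r) := hm.mul hr
  rw [key] at this
  simp [Nat.odd_iff, Nat.mul_mod_right] at this
end

section
/- For every even m ≥ 2, there exists a signed magic rectangle SMR(m, 3m/2; 3, 2): an m × (3m/2) array using each of ±1, …, ±(3m/2) exactly once, with exactly 3 filled cells in each row and 2 in each column, and all row and column sums zero. -/
def Arr (t r j : ℕ) : Option ℤ :=
  if r < t then
    if j = r ∨ j = t + r then some ((j:ℤ)+1)
    else if j = t + 2*r + 1 then some (-((j:ℤ)+1))
    else none
  else
    if j + r + 1 = 4*t then some ((j:ℤ)+1)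
    else if j + t = r ∨ j + 2*r + 2 = 5*t then some (-((j:ℤ)+1))
    else none

lemma Arr_isSome (t r j : ℕ) : (Arr t r j).isSome ↔
    ((r < t ∧ (j = r ∨ j = t + r ∨ j = t + 2*r + 1)) ∨
     (t ≤ r ∧ (j + r + 1 = 4*t ∨ j + t = r ∨ j + 2*r + 2 = 5*t))) := by
  unfold Arr
  split_ifs <;> simp_all <;> omega

lemma Arr_spec {t r j : ℕ} (ht : 1 ≤ t) (hr : r < 2*t) (hj : j < 3*t) (x : ℤ) :
    Arr t r j = some x ↔
      (((r < t ∧ (j = r ∨ j = t + r)) ∨ (t ≤ r ∧ j + r + 1 = 4*t)) ∧ x = (j:ℤ)+1) ∨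
      (((r < t ∧ j = t + 2*r + 1) ∨ (t ≤ r ∧ (j + t = r ∨ j + 2*r + 2 = 5*t))) ∧
        x = -((j:ℤ)+1)) := by
  unfold Arr
  split_ifs <;> simp_all <;> omega

lemma getD_zero_of_not_isSome {o : Option ℤ} (h : ¬ o.isSome = true) : o.getD 0 = 0 := by
  cases o <;> simp_all


theorem stmt_7 (m n : ℕ) (hm : Even m) (h2 : 2 ≤ m) (hn : 2 * n = 3 * m) :
    SMR m n 3 2 := by
  have hSMRval : ∀ x : ℤ, SMRvalue m 3 2 x ↔ (x ≠ 0 ∧ |x| ≤ (m : ℤ) * 3 / 2) := by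
    intro x
    unfold SMRvalue
    rw [if_neg (by obtain ⟨t, htm⟩ := hm; omega)]
    norm_num
  unfold SMR IsSMR
  simp only [hSMRval]
  obtain ⟨t, htm⟩ := hm
  have hm2 : m = 2*t := by omega
  have hn3 : n = 3*t := by omega
  have ht : 1 ≤ t := by omega
  -- row structure
  have hrow : ∀ r : Fin m, ∃ a b c : Fin n, a ≠ b ∧ a ≠ c ∧ b ≠ c ∧
      (Finset.univ.filter fun j : Fin n => (Arr t r.1 j.1).isSome) = {a, b, c} ∧
      ∃ va vb vc : ℤ, Arr t r.1 a.1 = some va ∧ Arr t r.1 b.1 = some vb ∧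
        Arr t r.1 c.1 = some vc ∧ va + vb + vc = 0 := by
    intro r
    have hr := r.2
    rcases lt_or_ge r.1 t with h | h
    · refine ⟨⟨r.1, by omega⟩, ⟨t + r.1, by omega⟩, ⟨t + 2*r.1 + 1, by omega⟩,
        by simp [Fin.ext_iff]; omega, by simp [Fin.ext_iff]; omega,
        by simp [Fin.ext_iff]; omega, ?_,
        (r.1:ℤ)+1, (t:ℤ)+r.1+1, -((t:ℤ)+2*r.1+2),
        (Arr_spec ht (by omega) (by omega) _).mpr (by push_cast; omega),
        (Arr_spec ht (by omega) (by omega) _).mpr (by push_cast; omega),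
        (Arr_spec ht (by omega) (by omega) _).mpr (by push_cast; omega), by ring⟩
      ext j
      simp only [Finset.mem_filter, Finset.mem_univ, true_and, Arr_isSome,
        Finset.mem_insert, Finset.mem_singleton, Fin.ext_iff]
      omega
    · refine ⟨⟨4*t - r.1 - 1, by omega⟩, ⟨r.1 - t, by omega⟩, ⟨5*t - 2*r.1 - 2, by omega⟩,
        by simp [Fin.ext_iff]; omega, by simp [Fin.ext_iff]; omega,
        by simp [Fin.ext_iff]; omega, ?_,
        4*(t:ℤ) - r.1, -((r.1:ℤ) - t + 1), -(5*(t:ℤ) - 2*r.1 - 1),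
        (Arr_spec ht (by omega) (by omega) _).mpr (by push_cast; omega),
        (Arr_spec ht (by omega) (by omega) _).mpr (by push_cast; omega),
        (Arr_spec ht (by omega) (by omega) _).mpr (by push_cast; omega), by ring⟩
      ext j
      simp only [Finset.mem_filter, Finset.mem_univ, true_and, Arr_isSome,
        Finset.mem_insert, Finset.mem_singleton, Fin.ext_iff]
      omega
  -- column structure
  have hcol : ∀ j : Fin n, ∃ a b : Fin m, a ≠ b ∧
      (Finset.univ.filter fun r : Fin m => (Arr t r.1 j.1).isSome) = {a, b} ∧
      Arr t a.1 j.1 = some ((j.1:ℤ)+1) ∧ Arr t b.1 j.1 = some (-((j.1:ℤ)+1)) := by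
    intro j
    have hj := j.2
    have key : ∃ ra rb : ℕ, ra < m ∧ rb < m ∧ ra ≠ rb ∧
        (∀ r : Fin m, ((r.1 < t ∧ (j.1 = r.1 ∨ j.1 = t + r.1 ∨ j.1 = t + 2*r.1 + 1)) ∨
         (t ≤ r.1 ∧ (j.1 + r.1 + 1 = 4*t ∨ j.1 + t = r.1 ∨ j.1 + 2*r.1 + 2 = 5*t)))
         ↔ (r.1 = ra ∨ r.1 = rb)) ∧
        ((ra < t ∧ (j.1 = ra ∨ j.1 = t + ra)) ∨ (t ≤ ra ∧ j.1 + ra + 1 = 4*t)) ∧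
        ((rb < t ∧ j.1 = t + 2*rb + 1) ∨ (t ≤ rb ∧ (j.1 + t = rb ∨ j.1 + 2*rb + 2 = 5*t))) := by
      rcases lt_or_ge j.1 t with h1 | h1
      · exact ⟨j.1, t + j.1, by omega, by omega, by omega,
          fun r => by have := r.2; constructor <;> intro <;> omega, by omega, by omega⟩
      · rcases lt_or_ge j.1 (2*t) with h2 | h2
        · by_cases h3 : (j.1 + t) % 2 = 0
          · exact ⟨j.1 - t, (5*t - j.1 - 2)/2, by omega, by omega, by omega,
              fun r => by have := r.2; constructor <;> intro <;> omega, by omega, by omega⟩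
          · exact ⟨j.1 - t, (j.1 - t - 1)/2, by omega, by omega, by omega,
              fun r => by have := r.2; constructor <;> intro <;> omega, by omega, by omega⟩
        · by_cases h3 : (j.1 + t) % 2 = 0
          · exact ⟨4*t - 1 - j.1, (5*t - j.1 - 2)/2, by omega, by omega, by omega,
              fun r => by have := r.2; constructor <;> intro <;> omega, by omega, by omega⟩
          · exact ⟨4*t - 1 - j.1, (j.1 - t - 1)/2, by omega, by omega, by omega,
              fun r => by have := r.2; constructor <;> intro <;> omega, by omega, by omega⟩
    obtain ⟨ra, rb, hra, hrb, hne, hiff, hpa, hpb⟩ := key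
    refine ⟨⟨ra, hra⟩, ⟨rb, hrb⟩, by simp [Fin.ext_iff]; omega, ?_,
      (Arr_spec ht (by omega) (by omega) _).mpr (by left; exact ⟨hpa, rfl⟩),
      (Arr_spec ht (by omega) (by omega) _).mpr (by right; exact ⟨hpb, rfl⟩)⟩
    ext r
    simp only [Finset.mem_filter, Finset.mem_univ, true_and, Arr_isSome,
      Finset.mem_insert, Finset.mem_singleton, Fin.ext_iff]
    exact hiff r
  have hdiv : (m : ℤ) * 3 / 2 = 3 * t := by omega
  refine ⟨fun r j => Arr t r.1 j.1, ?_, ?_, ?_, ?_, ?_, ?_⟩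
  · intro r
    obtain ⟨a, b, c, hab, hac, hbc, hfl, -⟩ := hrow r
    rw [hfl, Finset.card_insert_of_notMem (by simp [hab, hac]),
      Finset.card_insert_of_notMem (by simp [hbc]), Finset.card_singleton]
  · intro j
    obtain ⟨a, b, hab, hfl, -⟩ := hcol j
    rw [hfl, Finset.card_insert_of_notMem (by simp [hab]), Finset.card_singleton]
  · intro i j x hx
    rw [Arr_spec ht (by omega) (by omega)] at hx
    have hj := j.2
    constructor
    · omega
    · rw [abs_le]; omega
  · intro x hx
    rw [abs_le] at hx
    have hx0 := hx.1
    have hx1 := hx.2.1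
    have hx2 := hx.2.2
    have hv : 1 ≤ x.natAbs ∧ x.natAbs ≤ 3*t := by omega
    have huniq : ∀ (p : ℕ) (hp : p < m) (q : ℕ) (hq : q < n),
        Arr t p q = some x →
        ∀ z : Fin m × Fin n, Arr t z.1.1 z.2.1 = some x → z = (⟨p, hp⟩, ⟨q, hq⟩) := by
      intro p hp q hq hpq z hz
      rw [Arr_spec ht (by omega) (by omega)] at hpq hz
      obtain ⟨⟨z1, hz1⟩, ⟨z2, hz2⟩⟩ := z
      simp only [Prod.mk.injEq, Fin.mk.injEq]
      simp only at hz
      omega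
    set v := x.natAbs with hvdef
    have mk : ∀ row : ℕ, row < m → Arr t row (v - 1) = some x →
        ∃! p : Fin m × Fin n, Arr t p.1.1 p.2.1 = some x := by
      intro row hrow hmain
      exact ⟨(⟨row, hrow⟩, ⟨v - 1, by omega⟩), hmain,
        fun z hz => huniq _ hrow _ (by omega) hmain z hz⟩
    rcases lt_or_ge 0 x with h1 | h1
    · rcases le_or_gt v t with h2 | h2
      · exact mk (v - 1) (by omega)
          ((Arr_spec ht (by omega) (by omega) _).mpr (by push_cast; omega))
      · rcases le_or_gt v (2*t) with h3 | h3
        · exact mk (v - t - 1) (by omega)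
            ((Arr_spec ht (by omega) (by omega) _).mpr (by push_cast; omega))
        · exact mk (4*t - v) (by omega)
            ((Arr_spec ht (by omega) (by omega) _).mpr (by push_cast; omega))
    · rcases le_or_gt v t with h2 | h2
      · exact mk (t + v - 1) (by omega)
          ((Arr_spec ht (by omega) (by omega) _).mpr (by push_cast; omega))
      · by_cases h3 : (v + t) % 2 = 0
        · exact mk ((v - t - 2)/2) (by omega)
            ((Arr_spec ht (by omega) (by omega) _).mpr (by push_cast; omega))
        · exact mk (t + (3*t - 1 - v)/2) (by omega)
            ((Arr_spec ht (by omega) (by omega) _).mpr (by push_cast; omega))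
  · intro r
    obtain ⟨a, b, c, hab, hac, hbc, hfl, va, vb, vc, hva, hvb, hvc, hsum⟩ := hrow r
    have h0 : ∑ j : Fin n, (Arr t r.1 j.1).getD 0
        = ∑ j ∈ ({a, b, c} : Finset (Fin n)), (Arr t r.1 j.1).getD 0 := by
      refine (Finset.sum_subset (Finset.subset_univ _) ?_).symm
      intro x _ hx
      rw [← hfl] at hx
      simp only [Finset.mem_filter, Finset.mem_univ, true_and] at hx
      exact getD_zero_of_not_isSome hx
    rw [h0, Finset.sum_insert (by simp [hab, hac]), Finset.sum_insert (by simp [hbc]),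
      Finset.sum_singleton, hva, hvb, hvc]
    simp only [Option.getD_some]
    omega
  · intro j
    obtain ⟨a, b, hab, hfl, hva, hvb⟩ := hcol j
    have h0 : ∑ r : Fin m, (Arr t r.1 j.1).getD 0
        = ∑ r ∈ ({a, b} : Finset (Fin m)), (Arr t r.1 j.1).getD 0 := by
      refine (Finset.sum_subset (Finset.subset_univ _) ?_).symm
      intro x _ hx
      rw [← hfl] at hx
      simp only [Finset.mem_filter, Finset.mem_univ, true_and] at hx
      exact getD_zero_of_not_isSome hx
    rw [h0, Finset.sum_pair hab, hva, hvb]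
    simp only [Option.getD_some]
    ring
end

section
/- For all positive integers p, q ≥ 1, there exists a shiftable signed magic rectangle SMR(2q, 4pq; 4p, 2). -/
namespace SMR10

def eps (j : ℕ) : ℤ := if j % 4 = 0 ∨ j % 4 = 3 then 1 else -1
def E (j : ℕ) : ℤ := eps j * (j + 1)
def sgn (i : ℕ) : ℤ := if i % 2 = 0 then 1 else -1

def entry (p i j : ℕ) : Option ℤ :=
  if i = 2 * (j / (4 * p)) then some (E j)
  else if i = 2 * (j / (4 * p)) + 1 then some (-(E j)) else none

lemma entry_eq (p i j : ℕ) :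
    entry p i j = if j / (4 * p) = i / 2 then some (sgn i * E j) else none := by
  unfold entry sgn
  set d := j / (4 * p) with hd
  by_cases h1 : i = 2 * d
  · rw [if_pos h1, if_pos (by omega), if_pos (by omega)]
    ring_nf
  · rw [if_neg h1]
    by_cases h2 : i = 2 * d + 1
    · rw [if_pos h2, if_pos (by omega), if_neg (by omega)]
      ring_nf
    · rw [if_neg h2, if_neg (by omega)]

lemma isSome_iff (p i j : ℕ) : (entry p i j).isSome ↔ j / (4 * p) = i / 2 := by
  rw [entry_eq]; split <;> simp [*]

lemma getD_eq (p i j : ℕ) :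
    (entry p i j).getD 0 = if j / (4 * p) = i / 2 then sgn i * E j else 0 := by
  rw [entry_eq]; split <;> simp

lemma eps_cases (j : ℕ) : eps j = 1 ∨ eps j = -1 := by
  unfold eps; split <;> simp

lemma sgn_cases (i : ℕ) : sgn i = 1 ∨ sgn i = -1 := by
  unfold sgn; split <;> simp

lemma abs_E (j : ℕ) : |E j| = (j : ℤ) + 1 := by
  unfold E
  rcases eps_cases j with h | h <;> rw [h]
  · rw [one_mul, abs_of_nonneg (by positivity)]
  · rw [neg_one_mul, abs_neg, abs_of_nonneg (by positivity)]

lemma E_ne (j : ℕ) : E j ≠ 0 := by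
  intro h
  have := abs_E j
  rw [h, abs_zero] at this
  omega

lemma block_sum (p a : ℕ) (ha : a % 4 = 0) :
    ∑ t ∈ Finset.range (4 * p), E (a + t) = 0 := by
  induction p with
  | zero => simp
  | succ n ih =>
    have h4 : 4 * (n + 1) = (4 * n) + 1 + 1 + 1 + 1 := by ring
    rw [h4, Finset.sum_range_succ, Finset.sum_range_succ, Finset.sum_range_succ,
      Finset.sum_range_succ, ih]
    set b := a + 4 * n with hb
    have hb4 : b % 4 = 0 := by omega
    have e0 : eps b = 1 := by unfold eps; rw [if_pos (by omega)]
    have e1 : eps (b + 1) = -1 := by unfold eps; rw [if_neg (by omega)]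
    have e2 : eps (b + 2) = -1 := by unfold eps; rw [if_neg (by omega)]
    have e3 : eps (b + 3) = 1 := by unfold eps; rw [if_pos (by omega)]
    have h1 : a + (4 * n + 1) = b + 1 := by omega
    have h2 : a + (4 * n + 1 + 1) = b + 2 := by omega
    have h3 : a + (4 * n + 1 + 1 + 1) = b + 3 := by omega
    rw [h1, h2, h3]
    unfold E
    rw [e0, e1, e2, e3]
    push_cast
    ring

section Counting
variable (p q : ℕ) (hp : 1 ≤ p) (hq : 1 ≤ q)

lemma block_bound {p q c t : ℕ} (hc : c < q) (ht : t < 4 * p) :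
    4 * p * c + t < 4 * p * q := by
  have h1 : c + 1 ≤ q := hc
  have := Nat.mul_le_mul_left (4 * p) h1
  have h2 : 4 * p * (c + 1) = 4 * p * c + 4 * p := by ring
  omega

lemma row_count (hp : 1 ≤ p) (i : Fin (2 * q)) :
    (Finset.univ.filter fun j : Fin (4 * p * q) => (entry p i.val j.val).isSome).card
      = 4 * p := by
  have hc : i.val / 2 < q := by have := i.isLt; omega
  conv_rhs => rw [← Finset.card_fin (4 * p)]
  refine Finset.card_bij'
    (fun j _ => (⟨j.val % (4 * p), Nat.mod_lt _ (by omega)⟩ : Fin (4 * p)))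
    (fun t _ => (⟨4 * p * (i.val / 2) + t.val, block_bound hc t.isLt⟩ : Fin (4 * p * q)))
    ?_ ?_ ?_ ?_
  · intro a _; exact Finset.mem_univ _
  · intro t _
    simp only [Finset.mem_filter, Finset.mem_univ, true_and, isSome_iff]
    rw [Nat.mul_add_div (by omega), Nat.div_eq_of_lt t.isLt]; omega
  · intro a ha
    simp only [Finset.mem_filter, Finset.mem_univ, true_and, isSome_iff] at ha
    ext
    simp only
    rw [← ha]
    exact Nat.div_add_mod _ _
  · intro t _
    ext
    simp only
    rw [Nat.mul_add_mod, Nat.mod_eq_of_lt t.isLt]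

lemma col_count (hp : 1 ≤ p) (hq : 1 ≤ q) (j : Fin (4 * p * q)) :
    (Finset.univ.filter fun i : Fin (2 * q) => (entry p i.val j.val).isSome).card = 2 := by
  have hc : j.val / (4 * p) < q := Nat.div_lt_of_lt_mul (by have := j.isLt; omega)
  set c := j.val / (4 * p) with hcdef
  have h1 : 2 * c < 2 * q := by omega
  have h2 : 2 * c + 1 < 2 * q := by omega
  have : (Finset.univ.filter fun i : Fin (2 * q) => (entry p i.val j.val).isSome)
      = {⟨2 * c, h1⟩, ⟨2 * c + 1, h2⟩} := by
    ext i
    simp only [Finset.mem_filter, Finset.mem_univ, true_and, isSome_iff,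
      Finset.mem_insert, Finset.mem_singleton, Fin.ext_iff]
    omega
  rw [this, Finset.card_insert_of_notMem (by simp [Fin.ext_iff]), Finset.card_singleton]

end Counting

end SMR10

namespace SMR10

section Sums
variable {p q : ℕ}

lemma row_sum (hp : 1 ≤ p) (hq : 1 ≤ q) (i : Fin (2 * q)) :
    ∑ j : Fin (4 * p * q), (entry p i.val j.val).getD 0 = 0 := by
  have hc : i.val / 2 < q := by have := i.isLt; omega
  set c := i.val / 2 with hcdef
  have key : ∑ j ∈ (Finset.univ.filter
      fun j : Fin (4 * p * q) => j.val / (4 * p) = c),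
      (sgn i.val * E j.val) = sgn i.val * ∑ t ∈ Finset.range (4 * p), E (4 * p * c + t) := by
    rw [Finset.mul_sum]
    refine Finset.sum_bij'
      (fun j _ => j.val % (4 * p))
      (fun t ht => (⟨4 * p * c + t, block_bound hc (Finset.mem_range.mp ht)⟩ : Fin (4 * p * q)))
      ?_ ?_ ?_ ?_ ?_
    · intro a ha
      simp only [Finset.mem_filter, Finset.mem_univ, true_and] at ha
      exact Finset.mem_range.mpr (Nat.mod_lt _ (by omega))
    · intro t ht
      simp only [Finset.mem_filter, Finset.mem_univ, true_and]
      rw [Nat.mul_add_div (by omega), Nat.div_eq_of_lt (Finset.mem_range.mp ht)]; omega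
    · intro a ha
      simp only [Finset.mem_filter, Finset.mem_univ, true_and] at ha
      ext; simp only
      rw [← ha]
      exact Nat.div_add_mod _ _
    · intro t ht
      simp only
      rw [Nat.mul_add_mod, Nat.mod_eq_of_lt (Finset.mem_range.mp ht)]
    · intro a ha
      simp only [Finset.mem_filter, Finset.mem_univ, true_and] at ha
      congr 1
      conv_lhs => rw [← Nat.div_add_mod a.val (4 * p)]
      rw [ha]
  have hmod : (4 * p * c) % 4 = 0 := by
    have : 4 * p * c = 4 * (p * c) := by ring
    rw [this]
    exact Nat.mul_mod_right 4 (p * c)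
  calc ∑ j : Fin (4 * p * q), (entry p i.val j.val).getD 0
      = ∑ j ∈ (Finset.univ.filter fun j : Fin (4 * p * q) => j.val / (4 * p) = c),
          (sgn i.val * E j.val) := by
        rw [Finset.sum_filter]
        exact Finset.sum_congr rfl fun j _ => getD_eq p i.val j.val
    _ = sgn i.val * ∑ t ∈ Finset.range (4 * p), E (4 * p * c + t) := key
    _ = 0 := by rw [block_sum p _ hmod, mul_zero]

lemma col_sum (hp : 1 ≤ p) (hq : 1 ≤ q) (j : Fin (4 * p * q)) :
    ∑ i : Fin (2 * q), (entry p i.val j.val).getD 0 = 0 := by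
  have hc : j.val / (4 * p) < q := Nat.div_lt_of_lt_mul (by have := j.isLt; omega)
  set c := j.val / (4 * p) with hcdef
  have h1 : 2 * c < 2 * q := by omega
  have h2 : 2 * c + 1 < 2 * q := by omega
  have hne : (⟨2 * c, h1⟩ : Fin (2 * q)) ≠ ⟨2 * c + 1, h2⟩ := by simp [Fin.ext_iff]
  rw [← Finset.sum_subset (Finset.subset_univ ({⟨2 * c, h1⟩, ⟨2 * c + 1, h2⟩} :
      Finset (Fin (2 * q)))) ?_]
  · rw [Finset.sum_pair hne]
    simp only [getD_eq]
    rw [if_pos (by omega), if_pos (by omega)]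
    have s1 : sgn (2 * c) = 1 := by unfold sgn; rw [if_pos (by omega)]
    have s2 : sgn (2 * c + 1) = -1 := by unfold sgn; rw [if_neg (by omega)]
    rw [s1, s2]; ring
  · intro i _ hi
    simp only [Finset.mem_insert, Finset.mem_singleton, Fin.ext_iff] at hi
    rw [getD_eq, if_neg (by omega)]

end Sums

end SMR10

namespace SMR10

/-- involution pairing each even column with the next odd column -/
def nsig (j : ℕ) : ℕ := if j % 2 = 0 then j + 1 else j - 1

lemma nsig_nsig (j : ℕ) : nsig (nsig j) = j := by
  unfold nsig
  by_cases h : j % 2 = 0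
  · rw [if_pos h, if_neg (by omega)]; omega
  · rw [if_neg h, if_pos (by omega)]; omega

lemma eps_nsig (j : ℕ) : eps (nsig j) = -eps j := by
  have h4 : j % 4 = 0 ∨ j % 4 = 1 ∨ j % 4 = 2 ∨ j % 4 = 3 := by omega
  rcases h4 with h | h | h | h
  · have hn : nsig j = j + 1 := by unfold nsig; rw [if_pos (by omega)]
    rw [hn]; unfold eps; rw [if_neg (by omega), if_pos (by omega)]; try norm_num
  · have hn : nsig j = j - 1 := by unfold nsig; rw [if_neg (by omega)]
    rw [hn]; unfold eps; rw [if_pos (by omega), if_neg (by omega)]; try norm_num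
  · have hn : nsig j = j + 1 := by unfold nsig; rw [if_pos (by omega)]
    rw [hn]; unfold eps; rw [if_pos (by omega), if_neg (by omega)]; try norm_num
  · have hn : nsig j = j - 1 := by unfold nsig; rw [if_neg (by omega)]
    rw [hn]; unfold eps; rw [if_neg (by omega), if_pos (by omega)]; try norm_num

lemma nsig_lt {p q j : ℕ} (hp : 1 ≤ p) (hj : j < 4 * p * q) : nsig j < 4 * p * q := by
  have hev : (4 * p * q) % 2 = 0 := by
    have : 4 * p * q = 2 * (2 * p * q) := by ring
    rw [this]; exact Nat.mul_mod_right 2 _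
  unfold nsig
  by_cases h : j % 2 = 0
  · rw [if_pos h]; omega
  · rw [if_neg h]; omega

lemma nsig_div {p j : ℕ} (hp : 1 ≤ p) : nsig j / (4 * p) = j / (4 * p) := by
  have hd : (2:ℕ) ∣ 4 * p := ⟨2 * p, by ring⟩
  have hm : j % (4 * p) % 2 = j % 2 := Nat.mod_mod_of_dvd j hd
  have hlt : j % (4 * p) < 4 * p := Nat.mod_lt _ (by omega)
  unfold nsig
  by_cases h : j % 2 = 0
  · rw [if_pos h]
    conv_lhs => rw [← Nat.div_add_mod j (4 * p)]
    have : 4 * p * (j / (4 * p)) + j % (4 * p) + 1 = 4 * p * (j / (4 * p)) + (j % (4 * p) + 1) := by omega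
    rw [this, Nat.mul_add_div (by omega),
      Nat.div_eq_of_lt (show j % (4 * p) + 1 < 4 * p by omega)]
    omega
  · rw [if_neg h]
    have h1 : 1 ≤ j % (4 * p) := by omega
    conv_lhs => rw [← Nat.div_add_mod j (4 * p)]
    have : 4 * p * (j / (4 * p)) + j % (4 * p) - 1 = 4 * p * (j / (4 * p)) + (j % (4 * p) - 1) := by omega
    rw [this, Nat.mul_add_div (by omega),
      Nat.div_eq_of_lt (show j % (4 * p) - 1 < 4 * p by omega)]
    omega

lemma pos_iff {p : ℕ} (i j : ℕ) :
    (0 < (entry p i j).getD 0) ↔ (j / (4 * p) = i / 2 ∧ eps j = sgn i) := by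
  rw [getD_eq]
  split
  · rename_i h
    simp only [h, true_and]
    have hj : (0:ℤ) < (j:ℤ) + 1 := by positivity
    unfold E
    rcases sgn_cases i with hs | hs <;> rcases eps_cases j with he | he <;>
      rw [hs, he] <;> constructor <;> intro hh <;> first | linarith | norm_num at hh ⊢ <;> linarith
  · rename_i h
    simp [h]

lemma neg_iff {p : ℕ} (i j : ℕ) :
    ((entry p i j).getD 0 < 0) ↔ (j / (4 * p) = i / 2 ∧ eps j = -sgn i) := by
  rw [getD_eq]
  split
  · rename_i h
    simp only [h, true_and]
    have hj : (0:ℤ) < (j:ℤ) + 1 := by positivity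
    unfold E
    rcases sgn_cases i with hs | hs <;> rcases eps_cases j with he | he <;>
      rw [hs, he] <;> constructor <;> intro hh <;> first | linarith | norm_num at hh ⊢ <;> linarith
  · rename_i h
    simp [h]

lemma row_balance {p q : ℕ} (hp : 1 ≤ p) (i : Fin (2 * q)) :
    (Finset.univ.filter fun j : Fin (4 * p * q) => 0 < (entry p i.val j.val).getD 0).card
    = (Finset.univ.filter fun j : Fin (4 * p * q) => (entry p i.val j.val).getD 0 < 0).card := by
  refine Finset.card_bij'
    (fun j _ => (⟨nsig j.val, nsig_lt hp j.isLt⟩ : Fin (4 * p * q)))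
    (fun j _ => (⟨nsig j.val, nsig_lt hp j.isLt⟩ : Fin (4 * p * q)))
    ?_ ?_ ?_ ?_
  · intro a ha
    simp only [Finset.mem_filter, Finset.mem_univ, true_and, pos_iff, neg_iff] at ha ⊢
    exact ⟨by rw [nsig_div hp]; exact ha.1, by rw [eps_nsig, ha.2]⟩
  · intro a ha
    simp only [Finset.mem_filter, Finset.mem_univ, true_and, pos_iff, neg_iff] at ha ⊢
    refine ⟨by rw [nsig_div hp]; exact ha.1, by rw [eps_nsig, ha.2]; ring⟩
  · intro a _; ext; exact nsig_nsig _
  · intro a _; ext; exact nsig_nsig _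

lemma col_balance {p q : ℕ} (hp : 1 ≤ p) (hq : 1 ≤ q) (j : Fin (4 * p * q)) :
    (Finset.univ.filter fun i : Fin (2 * q) => 0 < (entry p i.val j.val).getD 0).card
    = (Finset.univ.filter fun i : Fin (2 * q) => (entry p i.val j.val).getD 0 < 0).card := by
  have hc : j.val / (4 * p) < q := Nat.div_lt_of_lt_mul (by have := j.isLt; omega)
  set c := j.val / (4 * p) with hcdef
  have h1 : 2 * c < 2 * q := by omega
  have h2 : 2 * c + 1 < 2 * q := by omega
  have hsgn1 : ∀ i : Fin (2 * q), (sgn i.val = 1 ↔ i.val % 2 = 0) := by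
    intro i; unfold sgn; split <;> simp <;> omega
  have hsgnm : ∀ i : Fin (2 * q), (sgn i.val = -1 ↔ i.val % 2 = 1) := by
    intro i; unfold sgn; split
    · constructor <;> intro h <;> [norm_num at h; omega]
    · simp; omega
  rcases eps_cases j.val with he | he
  · have e1 : (Finset.univ.filter fun i : Fin (2 * q) => 0 < (entry p i.val j.val).getD 0)
        = {⟨2 * c, h1⟩} := by
      ext i
      simp only [Finset.mem_filter, Finset.mem_univ, true_and, pos_iff, Finset.mem_singleton,
        Fin.ext_iff, he]
      constructor
      · rintro ⟨hd, hs⟩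
        have := (hsgn1 i).mp hs.symm
        omega
      · intro h
        refine ⟨by omega, ((hsgn1 i).mpr (by omega)).symm⟩
    have e2 : (Finset.univ.filter fun i : Fin (2 * q) => (entry p i.val j.val).getD 0 < 0)
        = {⟨2 * c + 1, h2⟩} := by
      ext i
      simp only [Finset.mem_filter, Finset.mem_univ, true_and, neg_iff, Finset.mem_singleton,
        Fin.ext_iff, he]
      constructor
      · rintro ⟨hd, hs⟩
        have hs' : sgn i.val = -1 := by linarith
        have := (hsgnm i).mp hs'
        omega
      · intro h
        refine ⟨by omega, by rw [(hsgnm i).mpr (by omega)]; try ring⟩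
    rw [e1, e2, Finset.card_singleton, Finset.card_singleton]
  · have e1 : (Finset.univ.filter fun i : Fin (2 * q) => 0 < (entry p i.val j.val).getD 0)
        = {⟨2 * c + 1, h2⟩} := by
      ext i
      simp only [Finset.mem_filter, Finset.mem_univ, true_and, pos_iff, Finset.mem_singleton,
        Fin.ext_iff, he]
      constructor
      · rintro ⟨hd, hs⟩
        have hs' : sgn i.val = -1 := hs.symm
        have := (hsgnm i).mp hs'
        omega
      · intro h
        refine ⟨by omega, ((hsgnm i).mpr (by omega)).symm⟩
    have e2 : (Finset.univ.filter fun i : Fin (2 * q) => (entry p i.val j.val).getD 0 < 0)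
        = {⟨2 * c, h1⟩} := by
      ext i
      simp only [Finset.mem_filter, Finset.mem_univ, true_and, neg_iff, Finset.mem_singleton,
        Fin.ext_iff, he]
      constructor
      · rintro ⟨hd, hs⟩
        have hs' : sgn i.val = 1 := by linarith
        have := (hsgn1 i).mp hs'
        omega
      · intro h
        refine ⟨by omega, by rw [(hsgn1 i).mpr (by omega)]; try ring⟩
    rw [e1, e2, Finset.card_singleton, Finset.card_singleton]

end SMR10

namespace SMR10

lemma SMRvalue_iff (p q : ℕ) (x : ℤ) :
    SMRvalue (2 * q) (4 * p) 2 x ↔ x ≠ 0 ∧ |x| ≤ 4 * p * q := by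
  unfold SMRvalue
  have hmr : 2 * q * (4 * p) % 2 = 0 := by
    have : 2 * q * (4 * p) = 2 * (q * (4 * p)) := by ring
    rw [this]; exact Nat.mul_mod_right 2 _
  rw [if_neg (by omega)]
  have hdiv : ((2 * q : ℕ) : ℤ) * ((4 * p : ℕ) : ℤ) / 2 = 4 * p * q := by
    push_cast
    rw [show (2 * (q : ℤ)) * (4 * p) = 2 * (4 * p * q) by ring]
    exact Int.mul_ediv_cancel_left _ (by norm_num)
  rw [hdiv]

lemma entry_value {p q : ℕ} (hp : 1 ≤ p) (i : Fin (2 * q)) (j : Fin (4 * p * q)) (x : ℤ)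
    (h : entry p i.val j.val = some x) : x ≠ 0 ∧ |x| ≤ 4 * p * q := by
  rw [entry_eq] at h
  split at h
  · have hx : x = sgn i.val * E j.val := by injection h; omega
    have habs : |x| = (j.val : ℤ) + 1 := by
      rw [hx, abs_mul]
      rcases sgn_cases i.val with hs | hs <;> rw [hs] <;> simp [abs_E]
    constructor
    · intro h0; rw [h0, abs_zero] at habs; omega
    · rw [habs]
      have h2 : ((j.val : ℤ)) + 1 ≤ ((4 * p * q : ℕ) : ℤ) := by exact_mod_cast j.isLt
      push_cast at h2 ⊢
      linarith
  · exact absurd h (by simp)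

lemma exists_unique_cell {p q : ℕ} (hp : 1 ≤ p) (hq : 1 ≤ q) (x : ℤ)
    (hx0 : x ≠ 0) (hxb : |x| ≤ 4 * p * q) :
    ∃! pr : Fin (2 * q) × Fin (4 * p * q), entry p pr.1.val pr.2.val = some x := by
  have habs : |x| = (x.natAbs : ℤ) := by rw [Int.abs_eq_natAbs]
  set v := x.natAbs with hv
  have hv1 : 1 ≤ v := by omega
  have hvb : v ≤ 4 * p * q := by rw [habs] at hxb; exact_mod_cast hxb
  have hj : v - 1 < 4 * p * q := by omega
  set j : ℕ := v - 1 with hjdef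
  have hjv : (j : ℤ) + 1 = (v : ℤ) := by push_cast; omega
  have hc : j / (4 * p) < q := Nat.div_lt_of_lt_mul (by omega)
  set c := j / (4 * p) with hcdef
  have hEx : E j = x ∨ E j = -x := by
    have h1 : |E j| = |x| := by rw [abs_E, habs, hjv]
    rcases abs_eq_abs.mp h1 with h | h
    · exact Or.inl h
    · exact Or.inr h
  have hi2 : 2 * c + 1 < 2 * q := by omega
  set i : ℕ := if E j = x then 2 * c else 2 * c + 1 with hidef
  have hilt : i < 2 * q := by unfold i; split <;> omega
  have hival : sgn i * E j = x := by
    unfold i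
    split
    · rename_i h
      rw [show sgn (2 * c) = 1 by unfold sgn; rw [if_pos (by omega)], one_mul, h]
    · rename_i h
      have hE : E j = -x := hEx.resolve_left h
      rw [show sgn (2 * c + 1) = -1 by unfold sgn; rw [if_neg (by omega)], hE]
      ring
  have hidiv : i / 2 = c := by unfold i; split <;> omega
  refine ⟨(⟨i, hilt⟩, ⟨j, hj⟩), ?_, ?_⟩
  · show entry p i j = some x
    rw [entry_eq, if_pos (show j / (4 * p) = i / 2 by omega), hival]
  · rintro ⟨⟨i', hi'⟩, ⟨j', hj'⟩⟩ h
    rw [entry_eq] at h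
    split at h
    · rename_i hd
      simp only at hd h
      have hx' : x = sgn i' * E j' := by injection h; omega
      have habs' : |x| = (j' : ℤ) + 1 := by
        rw [hx', abs_mul]
        rcases sgn_cases i' with hs | hs <;> rw [hs] <;> simp [abs_E]
      have hjj : j' = j := by
        have : (j' : ℤ) + 1 = (v : ℤ) := by rw [← habs', habs]
        omega
      subst hjj
      have hsgn_eq : sgn i' = sgn i := by
        have h1 : sgn i' * E j = sgn i * E j := by rw [← hx', hival]
        exact mul_right_cancel₀ (E_ne j) h1
      have hieq : i' = i := by
        have hm1 : i' % 2 = i % 2 := by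
          rcases sgn_cases i with hs | hs <;> rw [hs] at hsgn_eq
          · have h1 : i % 2 = 0 := by
              by_contra hcon
              have : sgn i = -1 := by unfold sgn; rw [if_neg hcon]
              rw [this] at hs; norm_num at hs
            have h2 : i' % 2 = 0 := by
              by_contra hcon
              have : sgn i' = -1 := by unfold sgn; rw [if_neg hcon]
              rw [this] at hsgn_eq; norm_num at hsgn_eq
            omega
          · have h1 : i % 2 = 1 := by
              by_contra hcon
              have : sgn i = 1 := by unfold sgn; rw [if_pos (by omega)]
              rw [this] at hs; norm_num at hs
            have h2 : i' % 2 = 1 := by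
              by_contra hcon
              have : sgn i' = 1 := by unfold sgn; rw [if_pos (by omega)]
              rw [this] at hsgn_eq; norm_num at hsgn_eq
            omega
        have hd2 : i' / 2 = i / 2 := by omega
        omega
      simp only [Prod.mk.injEq, Fin.mk.injEq]
      exact ⟨hieq, trivial⟩
    · exact absurd h (by simp)

end SMR10


open SMR10 in
theorem stmt_10 (p q : ℕ) (hp : 1 ≤ p) (hq : 1 ≤ q) :
    ShiftableSMR (2 * q) (4 * p * q) (4 * p) 2 := by
  refine ⟨fun i j => entry p i.val j.val, ⟨?_, ?_, ?_, ?_, ?_, ?_⟩, ?_, ?_⟩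
  · exact fun i => row_count p q hp i
  · exact fun j => col_count p q hp hq j
  · intro i j x h
    rw [SMRvalue_iff]
    exact entry_value hp i j x h
  · intro x hx
    rw [SMRvalue_iff] at hx
    exact exists_unique_cell hp hq x hx.1 hx.2
  · exact row_sum hp hq
  · exact col_sum hp hq
  · exact fun i => row_balance hp i
  · exact fun j => col_balance hp hq j
end

section
/- For all integers a, b ≥ 1, there exists a shiftable signed magic rectangle SMR(4b, 2b(4a+2); 4a+2, 2). -/
/-!
Take `K` rows `f₀, …, f_{K-1}` of length `r`, each with zero sum and as many positive as negative
entries, whose magnitudes run exactly once through `1, …, K r`. Placing the two rows `fₖ` and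
`-fₖ` in the `k`-th block of `r` columns gives a shiftable SMR(2K, K r; r, 2), since every column
then holds one `x` and one `-x`.

For `K = 2b` and `r = 4a+2`, rows `2t` and `2t+1` share the magnitudes `(8a+4) t + 1, …,
(8a+4) (t+1)`: row `2t` takes the first `4a+1` of them and the `(4a+3)`-rd (a row of `4a+2`
consecutive magnitudes would have odd sum). Group each row into the column pairs `(2p, 2p+1)`,
whose magnitudes differ by 1 except for one pair differing by 2, and give the two entries of a
pair opposite signs: the row is balanced and its sum is a signed sum of `2a` ones and one two,
with signs chosen so that `a+1` ones cancel the other `a-1` ones and the two.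
-/

open Finset

lemma smrValue_mul_two_iff {K r : ℕ} (s : ℕ) {x : ℤ} :
    SMRvalue (K * 2) r s x ↔ x.natAbs ∈ Icc 1 (K * r) := by
  have hcast : ((K * 2 : ℕ) : ℤ) * r / 2 = (K * r : ℕ) := by
    rw [show ((K * 2 : ℕ) : ℤ) * r = (K * r : ℕ) * 2 by push_cast; ring]
    exact Int.mul_ediv_cancel _ two_ne_zero
  rw [SMRvalue, if_neg (by rw [Nat.mul_right_comm, Nat.mul_mod_left]; omega), hcast, mem_Icc,
    Int.abs_eq_natAbs]
  omega

lemma Function.Injective.exists_eq_of_mem_Icc {α : Type*} [Fintype α] {g : α → ℕ}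
    (hg : Function.Injective g) (hmaps : ∀ a, g a ∈ Icc 1 (Fintype.card α)) {m : ℕ}
    (hm : m ∈ Icc 1 (Fintype.card α)) : ∃ a, g a = m := by
  obtain ⟨a, -, ha⟩ := surjOn_of_injOn_of_card_le (s := univ) g (fun a _ => hmaps a) hg.injOn
    (by simp) hm
  exact ⟨a, ha⟩

section Doubling

variable {K r : ℕ} (f : Fin K → Fin r → ℤ)

/-- Row `2k + e` is `f k` (for `e = 0`) or `-f k` (for `e = 1`), placed in the columns
`r k, …, r k + r - 1`. -/
def doubledArray (i : Fin (K * 2)) (j : Fin (K * r)) : Option ℤ :=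
  let (k, e) := finProdFinEquiv.symm i
  let (k', c) := finProdFinEquiv.symm j
  if k = k' then some (if e = 0 then f k' c else -f k' c) else none

lemma doubledArray_finProdFinEquiv (k k' : Fin K) (e : Fin 2) (c : Fin r) :
    doubledArray f (finProdFinEquiv (k, e)) (finProdFinEquiv (k', c)) =
      if k = k' then some (if e = 0 then f k' c else -f k' c) else none := by
  simp only [doubledArray, Equiv.symm_apply_apply]

lemma doubledArray_finProdFinEquiv_eq_some {k k' : Fin K} {e : Fin 2} {c : Fin r} {x : ℤ} :
    doubledArray f (finProdFinEquiv (k, e)) (finProdFinEquiv (k', c)) = some x ↔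
      k = k' ∧ (if e = 0 then f k' c else -f k' c) = x := by
  rw [doubledArray_finProdFinEquiv]
  by_cases hk : k = k' <;> simp [hk]

section RowsAndColumns

variable {M : Type*} [AddCommMonoid M] (φ : Option ℤ → M) (hφ : φ none = 0)
include hφ

lemma sum_row_doubledArray (k : Fin K) (e : Fin 2) :
    ∑ j, φ (doubledArray f (finProdFinEquiv (k, e)) j) =
      ∑ c, φ (some (if e = 0 then f k c else -f k c)) := by
  rw [← finProdFinEquiv.sum_comp, Fintype.sum_prod_type]
  simp only [doubledArray_finProdFinEquiv, apply_ite φ, hφ, sum_ite_irrel, sum_const_zero,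
    sum_ite_eq, mem_univ, if_true]

lemma sum_col_doubledArray (k : Fin K) (c : Fin r) :
    ∑ i, φ (doubledArray f i (finProdFinEquiv (k, c))) = φ (some (f k c)) + φ (some (-f k c)) := by
  rw [← finProdFinEquiv.sum_comp, Fintype.sum_prod_type]
  simp [doubledArray_finProdFinEquiv, apply_ite φ, hφ, Fin.sum_univ_two]

end RowsAndColumns

variable {f}

lemma isShiftable_doubledArray (hbal : ∀ k, #{c | 0 < f k c} = #{c | f k c < 0}) :
    IsShiftable (K * 2) (K * r) (doubledArray f) := by
  constructor
  · intro i
    obtain ⟨⟨k, e⟩, rfl⟩ := finProdFinEquiv.surjective i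
    have hk := hbal k
    simp only [card_filter] at hk ⊢
    rw [sum_row_doubledArray f (fun o => if 0 < o.getD 0 then 1 else 0) (by simp),
      sum_row_doubledArray f (fun o => if o.getD 0 < 0 then 1 else 0) (by simp)]
    fin_cases e <;> simp [hk]
  · intro j
    obtain ⟨⟨k, c⟩, rfl⟩ := finProdFinEquiv.surjective j
    simp only [card_filter]
    rw [sum_col_doubledArray f (fun o => if 0 < o.getD 0 then 1 else 0) (by simp),
      sum_col_doubledArray f (fun o => if o.getD 0 < 0 then 1 else 0) (by simp)]
    simp [add_comm]

variable (hmag : ∀ k c, (f k c).natAbs ∈ Icc 1 (K * r))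
  (hinj : Function.Injective fun p : Fin K × Fin r => (f p.1 p.2).natAbs)
include hmag hinj

lemma existsUnique_doubledArray_eq_some {x : ℤ} (hx : x.natAbs ∈ Icc 1 (K * r)) :
    ∃! p : Fin (K * 2) × Fin (K * r), doubledArray f p.1 p.2 = some x := by
  have hx0 : x ≠ 0 := by rintro rfl; simp at hx
  obtain ⟨⟨k, c⟩, hkc⟩ := hinj.exists_eq_of_mem_Icc (fun p => by simpa using hmag p.1 p.2)
    (by simpa using hx)
  refine ⟨(finProdFinEquiv (k, if f k c = x then 0 else 1), finProdFinEquiv (k, c)), ?_, ?_⟩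
  · rcases Int.natAbs_eq_natAbs_iff.mp hkc with h | h <;>
      simp [doubledArray_finProdFinEquiv, h]
  · rintro ⟨i, j⟩ hij
    obtain ⟨⟨k₁, e⟩, rfl⟩ := finProdFinEquiv.surjective i
    obtain ⟨⟨k₂, c₂⟩, rfl⟩ := finProdFinEquiv.surjective j
    obtain ⟨rfl, hval⟩ := (doubledArray_finProdFinEquiv_eq_some f).mp hij
    have hpos : (k₁, c₂) = (k, c) := hinj <| by
      change (f k₁ c₂).natAbs = (f k c).natAbs
      rw [hkc, ← hval]
      split_ifs <;> simp
    obtain ⟨rfl, rfl⟩ := Prod.ext_iff.mp hpos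
    fin_cases e
    · simp_all
    · subst hval
      simpa [self_eq_neg] using hx0

theorem isSMR_doubledArray (hsum : ∀ k, ∑ c, f k c = 0) :
    IsSMR (K * 2) (K * r) r 2 (doubledArray f) := by
  refine ⟨fun i => ?_, fun j => ?_, fun i j x hij => ?_, fun x hx => ?_, fun i => ?_, fun j => ?_⟩
  · obtain ⟨⟨k, e⟩, rfl⟩ := finProdFinEquiv.surjective i
    rw [card_filter, sum_row_doubledArray f (fun o => if o.isSome then 1 else 0) rfl]
    simp
  · obtain ⟨⟨k, c⟩, rfl⟩ := finProdFinEquiv.surjective j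
    rw [card_filter, sum_col_doubledArray f (fun o => if o.isSome then 1 else 0) rfl]
    rfl
  · obtain ⟨⟨k, e⟩, rfl⟩ := finProdFinEquiv.surjective i
    obtain ⟨⟨k', c⟩, rfl⟩ := finProdFinEquiv.surjective j
    obtain ⟨rfl, rfl⟩ := (doubledArray_finProdFinEquiv_eq_some f).mp hij
    rw [smrValue_mul_two_iff]
    split_ifs
    · exact hmag k c
    · simpa using hmag k c
  · exact existsUnique_doubledArray_eq_some hmag hinj ((smrValue_mul_two_iff 2).mp hx)
  · obtain ⟨⟨k, e⟩, rfl⟩ := finProdFinEquiv.surjective i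
    rw [sum_row_doubledArray f (fun o => o.getD 0) rfl]
    fin_cases e <;> simp [hsum]
  · obtain ⟨⟨k, c⟩, rfl⟩ := finProdFinEquiv.surjective j
    rw [sum_col_doubledArray f (fun o => o.getD 0) rfl]
    simp

theorem shiftableSMR_of_rows (hsum : ∀ k, ∑ c, f k c = 0)
    (hbal : ∀ k, #{c | 0 < f k c} = #{c | f k c < 0}) : ShiftableSMR (K * 2) (K * r) r 2 :=
  ⟨doubledArray f, isSMR_doubledArray hmag hinj hsum, isShiftable_doubledArray hbal⟩

end Doubling

lemma sum_range_two_mul {M : Type*} [AddCommMonoid M] (g : ℕ → M) (n : ℕ) :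
    ∑ c ∈ range (2 * n), g c = ∑ p ∈ range n, (g (2 * p) + g (2 * p + 1)) := by
  induction n with
  | zero => simp
  | succ n ih => rw [Nat.mul_succ, sum_range_succ, sum_range_succ, sum_range_succ, ih, add_assoc]

lemma card_pos_eq_card_neg_of_mul_neg (g : ℕ → ℤ) (n : ℕ)
    (hg : ∀ p < n, g (2 * p) * g (2 * p + 1) < 0) :
    #{c ∈ range (2 * n) | 0 < g c} = #{c ∈ range (2 * n) | g c < 0} := by
  simp only [card_filter, sum_range_two_mul]
  refine sum_congr rfl fun p hp => ?_
  rcases mul_neg_iff.mp (hg p (mem_range.mp hp)) with h | h <;>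
    simp [h.1, h.2, h.1.le, h.2.le, not_lt.mpr]

lemma card_filter_fin_eq_card_filter_range (P : ℕ → Prop) [DecidablePred P] (n : ℕ) :
    #{c : Fin n | P c} = #{c ∈ range n | P c} := by
  simp only [card_filter]
  exact Fin.sum_univ_eq_sum_range (fun c => if P c then 1 else 0) n

section Construction

/-- The magnitude in column `c` of row `u ∈ {0, 1}` of a `2 × (4a+2)` block, counted from `0`:
row `0` reads `0, 1, …, 4a, 4a+2` and row `1` reads `8a+3, 8a+2, …, 4a+3, 4a+1`. -/
def blockPos (a u c : ℕ) : ℕ :=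
  if u = 0 then (if c = 4 * a + 1 then 4 * a + 2 else c)
  else (if c = 4 * a + 1 then 4 * a + 1 else 8 * a + 3 - c)

def baseMag (a k c : ℕ) : ℕ := blockPos a (k % 2) c + (8 * a + 4) * (k / 2) + 1

/-- Columns `2p` and `2p+1` get opposite signs, chosen so that the pair contributes
`pairSum a p` to the row sum. -/
def baseRow (a k c : ℕ) : ℤ :=
  if (c / 2 ≠ 2 * a ∧ (c / 2 = 0 ∨ c / 2 % 2 = 1)) ↔ (k + c) % 2 = 0 then baseMag a k c
  else -baseMag a k c

def pairSum (a p : ℕ) : ℤ := if p = 2 * a then 2 else if p = 0 ∨ p % 2 = 1 then -1 else 1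

lemma baseRow_add_baseRow {a p : ℕ} (k : ℕ) (hp : p ≤ 2 * a) :
    baseRow a k (2 * p) + baseRow a k (2 * p + 1) = pairSum a p := by
  unfold baseRow baseMag blockPos pairSum
  generalize (8 * a + 4) * (k / 2) = t
  split_ifs <;> omega

lemma baseRow_mul_baseRow_neg (a k p : ℕ) :
    baseRow a k (2 * p) * baseRow a k (2 * p + 1) < 0 := by
  have h₀ : (0 : ℤ) < baseMag a k (2 * p) := by unfold baseMag; positivity
  have h₁ : (0 : ℤ) < baseMag a k (2 * p + 1) := by unfold baseMag; positivity
  unfold baseRow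
  split_ifs <;> first | omega | nlinarith

lemma sum_range_pairSum {a : ℕ} (ha : 1 ≤ a) : ∑ p ∈ range (2 * a + 1), pairSum a p = 0 := by
  have hpairs : ∀ q ∈ range a,
      pairSum a (2 * q) + pairSum a (2 * q + 1) = if q = 0 then -2 else 0 := by
    intro q hq
    rw [mem_range] at hq
    unfold pairSum
    split_ifs <;> omega
  rw [sum_range_succ, sum_range_two_mul, sum_congr rfl hpairs, sum_ite_eq',
    if_pos (mem_range.mpr ha)]
  simp [pairSum]

lemma sum_range_baseRow {a : ℕ} (ha : 1 ≤ a) (k : ℕ) :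
    ∑ c ∈ range (4 * a + 2), baseRow a k c = 0 := by
  rw [show 4 * a + 2 = 2 * (2 * a + 1) by ring, sum_range_two_mul,
    sum_congr rfl fun p hp => baseRow_add_baseRow k (by rw [mem_range] at hp; omega),
    sum_range_pairSum ha]

lemma natAbs_baseRow (a k c : ℕ) : (baseRow a k c).natAbs = baseMag a k c := by
  unfold baseRow
  split_ifs <;> simp

lemma blockPos_lt {a c : ℕ} (u : ℕ) (hc : c < 4 * a + 2) : blockPos a u c < 8 * a + 4 := by
  unfold blockPos
  split_ifs <;> omega

lemma blockPos_inj {a u u' c c' : ℕ} (hu : u < 2) (hu' : u' < 2) (hc : c < 4 * a + 2)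
    (hc' : c' < 4 * a + 2) (h : blockPos a u c = blockPos a u' c') : u = u' ∧ c = c' := by
  unfold blockPos at h
  split_ifs at h <;> omega

lemma baseMag_mem_Icc {a b k c : ℕ} (hk : k < 2 * b) (hc : c < 4 * a + 2) :
    baseMag a k c ∈ Icc 1 (2 * b * (4 * a + 2)) := by
  have hpos := blockPos_lt (k % 2) hc
  have hblock : (8 * a + 4) * (k / 2 + 1) ≤ (8 * a + 4) * b := Nat.mul_le_mul_left _ (by omega)
  rw [mem_Icc, baseMag]
  exact ⟨by omega, by nlinarith⟩

lemma baseMag_inj {a k k' c c' : ℕ} (hc : c < 4 * a + 2) (hc' : c' < 4 * a + 2)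
    (h : baseMag a k c = baseMag a k' c') : k = k' ∧ c = c' := by
  have hP : 0 < 8 * a + 4 := by omega
  obtain ⟨hdiv, hmod⟩ := (Nat.div_mod_unique hP).mpr ⟨rfl, blockPos_lt (k % 2) hc⟩
  obtain ⟨hdiv', hmod'⟩ := (Nat.div_mod_unique hP).mpr ⟨rfl, blockPos_lt (k' % 2) hc'⟩
  unfold baseMag at h
  rw [Nat.add_right_cancel h] at hdiv hmod
  obtain ⟨hu, rfl⟩ := blockPos_inj (Nat.mod_lt k two_pos) (Nat.mod_lt k' two_pos) hc hc'
    (hmod.symm.trans hmod')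
  omega

end Construction

theorem stmt_11_general (a b : ℕ) (ha : 1 ≤ a) :
    ShiftableSMR (4 * b) (2 * b * (4 * a + 2)) (4 * a + 2) 2 := by
  rw [show 4 * b = 2 * b * 2 by ring]
  refine shiftableSMR_of_rows (f := fun k c => baseRow a k c) (fun k c => ?_) ?_ (fun k => ?_)
    (fun k => ?_)
  · rw [natAbs_baseRow]
    exact baseMag_mem_Icc k.isLt c.isLt
  · rintro ⟨k, c⟩ ⟨k', c'⟩ h
    obtain ⟨hk, hc⟩ := baseMag_inj c.isLt c'.isLt (by simpa only [natAbs_baseRow] using h)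
    ext <;> simp [hk, hc]
  · rw [Fin.sum_univ_eq_sum_range (baseRow a k)]
    exact sum_range_baseRow ha k
  · rw [card_filter_fin_eq_card_filter_range (0 < baseRow a k ·),
      card_filter_fin_eq_card_filter_range (baseRow a k · < 0),
      show 4 * a + 2 = 2 * (2 * a + 1) by ring]
    exact card_pos_eq_card_neg_of_mul_neg _ _ fun p _ => baseRow_mul_baseRow_neg a k p

theorem stmt_11 (a b : ℕ) (ha : 1 ≤ a) (hb : 1 ≤ b) :
    ShiftableSMR (4 * b) (2 * b * (4 * a + 2)) (4 * a + 2) 2 :=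
  stmt_11_general a b ha
end

section
/- For all integers a, b ≥ 1, there exists a signed magic rectangle SMR(4b, 2b(4a+1); 4a+1, 2). -/
namespace SMR12

/- ----- construction data -----
value ranges (h := b-1):
 1,2 : quad rows (0,1),(2,3)
 [3,h+2]       wA  pos 4+2s neg 5+2s
 [h+3,2h+2]    xB  pos 4+2h+2s neg 5+2h+2s
 [2h+3,3h+2]   yA  pos 5+2s neg 4+2s
 [3h+3,4h+2]   wB  pos 4+2h+2s neg 5+2h+2s
 4h+3,4h+4,4h+5 : quad (1,0),(0,2),(2,1)
 [4h+6,5h+5]   xA  pos 4+2s neg 5+2s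
 [5h+6,6h+5]   vA  pos 4+2s neg 5+2s
 [6h+6,7h+5]   yB  pos 5+2h+2s neg 4+2h+2s
 7h+6..7h+10 : quad (0,1),(2,3),(3,0),(1,3),(3,2)
 [7h+11,9h+10] Z: even offset t: zB pos 5+2h+t neg 4+2h+t; odd t: zA pos 4+t neg 3+t
 [9h+11,10h+10] vB pos 4+2h+2s neg 5+2h+2s
 beyond: type3 quads, value 10h+11 + 8(h+1)w + 4u + d.
-/

def pos1 (h v : ℕ) : ℕ :=
  if v = 1 then 0
  else if v = 2 then 2
  else if v ≤ h+2 then 4 + 2*(v-3)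
  else if v ≤ 2*h+2 then 4+2*h + 2*(v-(h+3))
  else if v ≤ 3*h+2 then 5 + 2*(v-(2*h+3))
  else 4+2*h + 2*(v-(3*h+3))

def pos2 (h v : ℕ) : ℕ :=
  if v = 4*h+3 then 1
  else if v = 4*h+4 then 0
  else if v = 4*h+5 then 2
  else if v ≤ 5*h+5 then 4 + 2*(v-(4*h+6))
  else if v ≤ 6*h+5 then 4 + 2*(v-(5*h+6))
  else 5+2*h + 2*(v-(6*h+6))

def pos3 (h v : ℕ) : ℕ :=
  if v = 7*h+6 then 0
  else if v = 7*h+7 then 2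
  else if v = 7*h+8 then 3
  else if v = 7*h+9 then 1
  else 3

def pos4 (h v : ℕ) : ℕ :=
  if v ≤ 9*h+10 then
    (if (v - (7*h+11)) % 2 = 0 then 5+2*h + (v - (7*h+11)) else 4 + (v - (7*h+11)))
  else 4+2*h + 2*(v-(9*h+11))

def post3 (h v : ℕ) : ℕ :=
  2*(((v - (10*h+11)) % (8*(h+1))) / 4) +
    (if (v - (10*h+11)) % 4 = 1 ∨ (v - (10*h+11)) % 4 = 2 then 1 else 0)

def pos (h v : ℕ) : ℕ :=
  if v ≤ 4*h+2 then pos1 h v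
  else if v ≤ 7*h+5 then pos2 h v
  else if v ≤ 7*h+10 then pos3 h v
  else if v ≤ 10*h+10 then pos4 h v
  else post3 h v

def neg1 (h v : ℕ) : ℕ :=
  if v = 1 then 1
  else if v = 2 then 3
  else if v ≤ h+2 then 5 + 2*(v-3)
  else if v ≤ 2*h+2 then 5+2*h + 2*(v-(h+3))
  else if v ≤ 3*h+2 then 4 + 2*(v-(2*h+3))
  else 5+2*h + 2*(v-(3*h+3))

def neg2 (h v : ℕ) : ℕ :=
  if v = 4*h+3 then 0
  else if v = 4*h+4 then 2
  else if v = 4*h+5 then 1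
  else if v ≤ 5*h+5 then 5 + 2*(v-(4*h+6))
  else if v ≤ 6*h+5 then 5 + 2*(v-(5*h+6))
  else 4+2*h + 2*(v-(6*h+6))

def neg3 (h v : ℕ) : ℕ :=
  if v = 7*h+6 then 1
  else if v = 7*h+7 then 3
  else if v = 7*h+8 then 0
  else if v = 7*h+9 then 3
  else 2

def neg4 (h v : ℕ) : ℕ :=
  if v ≤ 9*h+10 then
    (if (v - (7*h+11)) % 2 = 0 then 4+2*h + (v - (7*h+11)) else 3 + (v - (7*h+11)))
  else 5+2*h + 2*(v-(9*h+11))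

def negt3 (h v : ℕ) : ℕ :=
  2*(((v - (10*h+11)) % (8*(h+1))) / 4) +
    (if (v - (10*h+11)) % 4 = 1 ∨ (v - (10*h+11)) % 4 = 2 then 0 else 1)

def neg (h v : ℕ) : ℕ :=
  if v ≤ 4*h+2 then neg1 h v
  else if v ≤ 7*h+5 then neg2 h v
  else if v ≤ 7*h+10 then neg3 h v
  else if v ≤ 10*h+10 then neg4 h v
  else negt3 h v

lemma bounds (h : ℕ) (v : ℕ) (hv : 1 ≤ v) :
    pos h v < 4*h+4 ∧ neg h v < 4*h+4 ∧ pos h v ≠ neg h v := by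
  unfold pos neg
  by_cases c1 : v ≤ 4*h+2
  · rw [if_pos c1, if_pos c1]; unfold pos1 neg1; split_ifs <;> omega
  rw [if_neg c1, if_neg c1]
  by_cases c2 : v ≤ 7*h+5
  · rw [if_pos c2, if_pos c2]; unfold pos2 neg2; split_ifs <;> omega
  rw [if_neg c2, if_neg c2]
  by_cases c3 : v ≤ 7*h+10
  · rw [if_pos c3, if_pos c3]; unfold pos3 neg3; split_ifs <;> omega
  rw [if_neg c3, if_neg c3]
  by_cases c4 : v ≤ 10*h+10
  · rw [if_pos c4, if_pos c4]; unfold pos4 neg4; split_ifs <;> omega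
  rw [if_neg c4, if_neg c4]
  unfold post3 negt3
  have h8 : 0 < 8*(h+1) := by omega
  have hm := Nat.mod_lt (v - (10*h+11)) h8
  have hd : ((v - (10*h+11)) % (8*(h+1))) / 4 < 2*(h+1) := by
    apply Nat.div_lt_of_lt_mul; omega
  split_ifs <;> omega

variable {M : Type*} [AddCommMonoid M]

lemma sum_ite_lin (i p0 L : ℕ) (G : ℕ → M) :
    ∑ s ∈ Finset.range L, (if i = p0 + 2*s then G s else 0)
    = if p0 ≤ i ∧ i < p0 + 2*L ∧ (i - p0) % 2 = 0 then G ((i - p0)/2) else 0 := by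
  by_cases hc : p0 ≤ i ∧ i < p0 + 2*L ∧ (i - p0) % 2 = 0
  · rw [if_pos hc]
    rw [Finset.sum_eq_single_of_mem ((i - p0)/2) (by simp; omega)
      (fun b _ hb => if_neg (by omega))]
    rw [if_pos (by omega)]
  · rw [if_neg hc]
    apply Finset.sum_eq_zero
    intro s hs
    rw [if_neg (by simp at hs; omega)]

lemma sum_ite_lin0 (i L : ℕ) (G : ℕ → M) :
    ∑ s ∈ Finset.range L, (if i = 2*s then G s else 0)
    = if i < 2*L ∧ i % 2 = 0 then G (i/2) else 0 := by
  by_cases hc : i < 2*L ∧ i % 2 = 0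
  · rw [if_pos hc]
    rw [Finset.sum_eq_single_of_mem (i/2) (by simp; omega)
      (fun b _ hb => if_neg (by omega))]
    rw [if_pos (by omega)]
  · rw [if_neg hc]
    apply Finset.sum_eq_zero
    intro s hs
    rw [if_neg (by simp at hs; omega)]

lemma sum_ite_lin1 (i L : ℕ) (G : ℕ → M) :
    ∑ s ∈ Finset.range L, (if i = 2*s+1 then G s else 0)
    = if i < 2*L+1 ∧ i % 2 = 1 then G (i/2) else 0 := by
  by_cases hc : i < 2*L+1 ∧ i % 2 = 1
  · rw [if_pos hc]
    rw [Finset.sum_eq_single_of_mem (i/2) (by simp; omega)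
      (fun b _ hb => if_neg (by omega))]
    rw [if_pos (by omega)]
  · rw [if_neg hc]
    apply Finset.sum_eq_zero
    intro s hs
    rw [if_neg (by simp at hs; omega)]

lemma sum_range_two_mul (L : ℕ) (f : ℕ → M) :
    ∑ t ∈ Finset.range (2*L), f t = ∑ s ∈ Finset.range L, (f (2*s) + f (2*s+1)) := by
  induction L with
  | zero => simp
  | succ L ih =>
      rw [show 2*(L+1) = (2*L) + 1 + 1 by ring]
      rw [Finset.sum_range_succ, Finset.sum_range_succ, Finset.sum_range_succ, ih, add_assoc]

lemma sum_range_mul (e K : ℕ) (f : ℕ → M) :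
    ∑ t ∈ Finset.range (e*K), f t
      = ∑ w ∈ Finset.range e, ∑ r ∈ Finset.range K, f (w*K + r) := by
  induction e with
  | zero => simp
  | succ e ih =>
      rw [show (e+1)*K = e*K + K by ring, Finset.sum_range_add, ih, Finset.sum_range_succ]


section evals
variable (h s : ℕ)

lemma ev1p : pos h 1 = 0 := by unfold pos pos1; split_ifs <;> first | rfl | omega
lemma ev1n : neg h 1 = 1 := by unfold neg neg1; split_ifs <;> first | rfl | omega
lemma ev2p : pos h 2 = 2 := by unfold pos pos1; split_ifs <;> first | rfl | omega
lemma ev2n : neg h 2 = 3 := by unfold neg neg1; split_ifs <;> first | rfl | omega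

lemma evq3p1 : pos h (4*h+3) = 1 := by unfold pos pos2; split_ifs <;> first | rfl | omega
lemma evq3n1 : neg h (4*h+3) = 0 := by unfold neg neg2; split_ifs <;> first | rfl | omega
lemma evq3p2 : pos h (4*h+4) = 0 := by unfold pos pos2; split_ifs <;> first | rfl | omega
lemma evq3n2 : neg h (4*h+4) = 2 := by unfold neg neg2; split_ifs <;> first | rfl | omega
lemma evq3p3 : pos h (4*h+5) = 2 := by unfold pos pos2; split_ifs <;> first | rfl | omega
lemma evq3n3 : neg h (4*h+5) = 1 := by unfold neg neg2; split_ifs <;> first | rfl | omega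

lemma evq5p1 : pos h (7*h+6) = 0 := by unfold pos pos3; split_ifs <;> first | rfl | omega
lemma evq5n1 : neg h (7*h+6) = 1 := by unfold neg neg3; split_ifs <;> first | rfl | omega
lemma evq5p2 : pos h (7*h+7) = 2 := by unfold pos pos3; split_ifs <;> first | rfl | omega
lemma evq5n2 : neg h (7*h+7) = 3 := by unfold neg neg3; split_ifs <;> first | rfl | omega
lemma evq5p3 : pos h (7*h+8) = 3 := by unfold pos pos3; split_ifs <;> first | rfl | omega
lemma evq5n3 : neg h (7*h+8) = 0 := by unfold neg neg3; split_ifs <;> first | rfl | omega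
lemma evq5p4 : pos h (7*h+9) = 1 := by unfold pos pos3; split_ifs <;> first | rfl | omega
lemma evq5n4 : neg h (7*h+9) = 3 := by unfold neg neg3; split_ifs <;> first | rfl | omega
lemma evq5p5 : pos h (7*h+10) = 3 := by unfold pos pos3; split_ifs <;> first | rfl | omega
lemma evq5n5 : neg h (7*h+10) = 2 := by unfold neg neg3; split_ifs <;> first | rfl | omega

variable (hs : s < h)
include hs

lemma ev_wA_p : pos h (3+s) = 4+2*s := by
  unfold pos pos1; split_ifs <;> first | omega | (exfalso; omega)
lemma ev_wA_n : neg h (3+s) = 5+2*s := by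
  unfold neg neg1; split_ifs <;> first | omega | (exfalso; omega)
lemma ev_xB_p : pos h (h+3+s) = 4+2*h+2*s := by
  unfold pos pos1; split_ifs <;> first | omega | (exfalso; omega)
lemma ev_xB_n : neg h (h+3+s) = 5+2*h+2*s := by
  unfold neg neg1; split_ifs <;> first | omega | (exfalso; omega)
lemma ev_yA_p : pos h (2*h+3+s) = 5+2*s := by
  unfold pos pos1; split_ifs <;> first | omega | (exfalso; omega)
lemma ev_yA_n : neg h (2*h+3+s) = 4+2*s := by
  unfold neg neg1; split_ifs <;> first | omega | (exfalso; omega)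
lemma ev_wB_p : pos h (3*h+3+s) = 4+2*h+2*s := by
  unfold pos pos1; split_ifs <;> first | omega | (exfalso; omega)
lemma ev_wB_n : neg h (3*h+3+s) = 5+2*h+2*s := by
  unfold neg neg1; split_ifs <;> first | omega | (exfalso; omega)
lemma ev_xA_p : pos h (4*h+6+s) = 4+2*s := by
  unfold pos pos2; split_ifs <;> first | omega | (exfalso; omega)
lemma ev_xA_n : neg h (4*h+6+s) = 5+2*s := by
  unfold neg neg2; split_ifs <;> first | omega | (exfalso; omega)
lemma ev_vA_p : pos h (5*h+6+s) = 4+2*s := by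
  unfold pos pos2; split_ifs <;> first | omega | (exfalso; omega)
lemma ev_vA_n : neg h (5*h+6+s) = 5+2*s := by
  unfold neg neg2; split_ifs <;> first | omega | (exfalso; omega)
lemma ev_yB_p : pos h (6*h+6+s) = 5+2*h+2*s := by
  unfold pos pos2; split_ifs <;> first | omega | (exfalso; omega)
lemma ev_yB_n : neg h (6*h+6+s) = 4+2*h+2*s := by
  unfold neg neg2; split_ifs <;> first | omega | (exfalso; omega)
lemma ev_zB_p : pos h (7*h+11+2*s) = 5+2*h+2*s := by
  unfold pos pos4; split_ifs <;> first | omega | (exfalso; omega)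
lemma ev_zB_n : neg h (7*h+11+2*s) = 4+2*h+2*s := by
  unfold neg neg4; split_ifs <;> first | omega | (exfalso; omega)
lemma ev_zA_p : pos h (7*h+12+2*s) = 5+2*s := by
  unfold pos pos4; split_ifs <;> first | omega | (exfalso; omega)
lemma ev_zA_n : neg h (7*h+12+2*s) = 4+2*s := by
  unfold neg neg4; split_ifs <;> first | omega | (exfalso; omega)
lemma ev_vB_p : pos h (9*h+11+s) = 4+2*h+2*s := by
  unfold pos pos4; split_ifs <;> first | omega | (exfalso; omega)
lemma ev_vB_n : neg h (9*h+11+s) = 5+2*h+2*s := by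
  unfold neg neg4; split_ifs <;> first | omega | (exfalso; omega)

end evals

section t3
variable (h w u d : ℕ)

lemma pos_t3 (hu : u < 2*(h+1)) (hd : d < 4) :
    pos h (10*h+11 + (w*(8*(h+1)) + (u*4 + d)))
      = 2*u + (if d = 1 ∨ d = 2 then 1 else 0) := by
  have hmod8 : (w*(8*(h+1)) + (u*4 + d)) % (8*(h+1)) = u*4 + d := by
    rw [mul_comm w, Nat.mul_add_mod]; exact Nat.mod_eq_of_lt (by omega)
  have hmod4 : (w*(8*(h+1)) + (u*4 + d)) % 4 = d := by
    rw [show w*(8*(h+1)) + (u*4 + d) = 4*(w*(2*(h+1)) + u) + d by ring, Nat.mul_add_mod]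
    exact Nat.mod_eq_of_lt hd
  have hdiv : (u*4 + d)/4 = u := by omega
  generalize hT : w*(8*(h+1)) + (u*4 + d) = t at hmod8 hmod4 ⊢
  unfold pos post3
  rw [if_neg (by omega), if_neg (by omega), if_neg (by omega), if_neg (by omega)]
  rw [show 10*h+11+t - (10*h+11) = t by omega, hmod8, hdiv, hmod4]

lemma neg_t3 (hu : u < 2*(h+1)) (hd : d < 4) :
    neg h (10*h+11 + (w*(8*(h+1)) + (u*4 + d)))
      = 2*u + (if d = 1 ∨ d = 2 then 0 else 1) := by
  have hmod8 : (w*(8*(h+1)) + (u*4 + d)) % (8*(h+1)) = u*4 + d := by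
    rw [mul_comm w, Nat.mul_add_mod]; exact Nat.mod_eq_of_lt (by omega)
  have hmod4 : (w*(8*(h+1)) + (u*4 + d)) % 4 = d := by
    rw [show w*(8*(h+1)) + (u*4 + d) = 4*(w*(2*(h+1)) + u) + d by ring, Nat.mul_add_mod]
    exact Nat.mod_eq_of_lt hd
  have hdiv : (u*4 + d)/4 = u := by omega
  generalize hT : w*(8*(h+1)) + (u*4 + d) = t at hmod8 hmod4 ⊢
  unfold neg negt3
  rw [if_neg (by omega), if_neg (by omega), if_neg (by omega), if_neg (by omega)]
  rw [show 10*h+11+t - (10*h+11) = t by omega, hmod8, hdiv, hmod4]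

end t3


section pieces
variable {M : Type*} [AddCommMonoid M] (h i : ℕ) (gp gn : ℕ → M)


lemma piece_wA :
    ∑ s ∈ Finset.range h,
      ((if i = pos h (2 + s + 1) then gp (2 + s + 1) else 0) +
       (if i = neg h (2 + s + 1) then gn (2 + s + 1) else 0))
    = (if 4 ≤ i ∧ i < 4 + 2*h ∧ (i - 4) % 2 = 0 then gp (3 + ((i - 4)/2)) else 0) +
      (if 5 ≤ i ∧ i < 5 + 2*h ∧ (i - 5) % 2 = 0 then gn (3 + ((i - 5)/2)) else 0) := by
  have step : ∀ s ∈ Finset.range h,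
      ((if i = pos h (2 + s + 1) then gp (2 + s + 1) else 0) +
       (if i = neg h (2 + s + 1) then gn (2 + s + 1) else 0))
      = ((if i = 4 + 2*s then gp (3+s) else 0) +
         (if i = 5 + 2*s then gn (3+s) else 0)) := by
    intro s hs
    have hs' : s < h := Finset.mem_range.mp hs
    rw [show 2 + s + 1 = 3+s by omega, ev_wA_p h s hs', ev_wA_n h s hs']
  rw [Finset.sum_congr rfl step, Finset.sum_add_distrib,
      sum_ite_lin i (4) h (fun s => gp (3+s)),
      sum_ite_lin i (5) h (fun s => gn (3+s))]


lemma piece_xB :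
    ∑ s ∈ Finset.range h,
      ((if i = pos h (h+2 + s + 1) then gp (h+2 + s + 1) else 0) +
       (if i = neg h (h+2 + s + 1) then gn (h+2 + s + 1) else 0))
    = (if 4+2*h ≤ i ∧ i < 4+2*h + 2*h ∧ (i - (4+2*h)) % 2 = 0 then gp (h+3 + ((i - (4+2*h))/2)) else 0) +
      (if 5+2*h ≤ i ∧ i < 5+2*h + 2*h ∧ (i - (5+2*h)) % 2 = 0 then gn (h+3 + ((i - (5+2*h))/2)) else 0) := by
  have step : ∀ s ∈ Finset.range h,
      ((if i = pos h (h+2 + s + 1) then gp (h+2 + s + 1) else 0) +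
       (if i = neg h (h+2 + s + 1) then gn (h+2 + s + 1) else 0))
      = ((if i = 4+2*h + 2*s then gp (h+3+s) else 0) +
         (if i = 5+2*h + 2*s then gn (h+3+s) else 0)) := by
    intro s hs
    have hs' : s < h := Finset.mem_range.mp hs
    rw [show h+2 + s + 1 = h+3+s by omega, ev_xB_p h s hs', ev_xB_n h s hs']
  rw [Finset.sum_congr rfl step, Finset.sum_add_distrib,
      sum_ite_lin i (4+2*h) h (fun s => gp (h+3+s)),
      sum_ite_lin i (5+2*h) h (fun s => gn (h+3+s))]


lemma piece_yA :
    ∑ s ∈ Finset.range h,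
      ((if i = pos h (2*h+2 + s + 1) then gp (2*h+2 + s + 1) else 0) +
       (if i = neg h (2*h+2 + s + 1) then gn (2*h+2 + s + 1) else 0))
    = (if 5 ≤ i ∧ i < 5 + 2*h ∧ (i - 5) % 2 = 0 then gp (2*h+3 + ((i - 5)/2)) else 0) +
      (if 4 ≤ i ∧ i < 4 + 2*h ∧ (i - 4) % 2 = 0 then gn (2*h+3 + ((i - 4)/2)) else 0) := by
  have step : ∀ s ∈ Finset.range h,
      ((if i = pos h (2*h+2 + s + 1) then gp (2*h+2 + s + 1) else 0) +
       (if i = neg h (2*h+2 + s + 1) then gn (2*h+2 + s + 1) else 0))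
      = ((if i = 5 + 2*s then gp (2*h+3+s) else 0) +
         (if i = 4 + 2*s then gn (2*h+3+s) else 0)) := by
    intro s hs
    have hs' : s < h := Finset.mem_range.mp hs
    rw [show 2*h+2 + s + 1 = 2*h+3+s by omega, ev_yA_p h s hs', ev_yA_n h s hs']
  rw [Finset.sum_congr rfl step, Finset.sum_add_distrib,
      sum_ite_lin i (5) h (fun s => gp (2*h+3+s)),
      sum_ite_lin i (4) h (fun s => gn (2*h+3+s))]


lemma piece_wB :
    ∑ s ∈ Finset.range h,
      ((if i = pos h (3*h+2 + s + 1) then gp (3*h+2 + s + 1) else 0) +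
       (if i = neg h (3*h+2 + s + 1) then gn (3*h+2 + s + 1) else 0))
    = (if 4+2*h ≤ i ∧ i < 4+2*h + 2*h ∧ (i - (4+2*h)) % 2 = 0 then gp (3*h+3 + ((i - (4+2*h))/2)) else 0) +
      (if 5+2*h ≤ i ∧ i < 5+2*h + 2*h ∧ (i - (5+2*h)) % 2 = 0 then gn (3*h+3 + ((i - (5+2*h))/2)) else 0) := by
  have step : ∀ s ∈ Finset.range h,
      ((if i = pos h (3*h+2 + s + 1) then gp (3*h+2 + s + 1) else 0) +
       (if i = neg h (3*h+2 + s + 1) then gn (3*h+2 + s + 1) else 0))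
      = ((if i = 4+2*h + 2*s then gp (3*h+3+s) else 0) +
         (if i = 5+2*h + 2*s then gn (3*h+3+s) else 0)) := by
    intro s hs
    have hs' : s < h := Finset.mem_range.mp hs
    rw [show 3*h+2 + s + 1 = 3*h+3+s by omega, ev_wB_p h s hs', ev_wB_n h s hs']
  rw [Finset.sum_congr rfl step, Finset.sum_add_distrib,
      sum_ite_lin i (4+2*h) h (fun s => gp (3*h+3+s)),
      sum_ite_lin i (5+2*h) h (fun s => gn (3*h+3+s))]


lemma piece_xA :
    ∑ s ∈ Finset.range h,
      ((if i = pos h (4*h+5 + s + 1) then gp (4*h+5 + s + 1) else 0) +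
       (if i = neg h (4*h+5 + s + 1) then gn (4*h+5 + s + 1) else 0))
    = (if 4 ≤ i ∧ i < 4 + 2*h ∧ (i - 4) % 2 = 0 then gp (4*h+6 + ((i - 4)/2)) else 0) +
      (if 5 ≤ i ∧ i < 5 + 2*h ∧ (i - 5) % 2 = 0 then gn (4*h+6 + ((i - 5)/2)) else 0) := by
  have step : ∀ s ∈ Finset.range h,
      ((if i = pos h (4*h+5 + s + 1) then gp (4*h+5 + s + 1) else 0) +
       (if i = neg h (4*h+5 + s + 1) then gn (4*h+5 + s + 1) else 0))
      = ((if i = 4 + 2*s then gp (4*h+6+s) else 0) +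
         (if i = 5 + 2*s then gn (4*h+6+s) else 0)) := by
    intro s hs
    have hs' : s < h := Finset.mem_range.mp hs
    rw [show 4*h+5 + s + 1 = 4*h+6+s by omega, ev_xA_p h s hs', ev_xA_n h s hs']
  rw [Finset.sum_congr rfl step, Finset.sum_add_distrib,
      sum_ite_lin i (4) h (fun s => gp (4*h+6+s)),
      sum_ite_lin i (5) h (fun s => gn (4*h+6+s))]


lemma piece_vA :
    ∑ s ∈ Finset.range h,
      ((if i = pos h (5*h+5 + s + 1) then gp (5*h+5 + s + 1) else 0) +
       (if i = neg h (5*h+5 + s + 1) then gn (5*h+5 + s + 1) else 0))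
    = (if 4 ≤ i ∧ i < 4 + 2*h ∧ (i - 4) % 2 = 0 then gp (5*h+6 + ((i - 4)/2)) else 0) +
      (if 5 ≤ i ∧ i < 5 + 2*h ∧ (i - 5) % 2 = 0 then gn (5*h+6 + ((i - 5)/2)) else 0) := by
  have step : ∀ s ∈ Finset.range h,
      ((if i = pos h (5*h+5 + s + 1) then gp (5*h+5 + s + 1) else 0) +
       (if i = neg h (5*h+5 + s + 1) then gn (5*h+5 + s + 1) else 0))
      = ((if i = 4 + 2*s then gp (5*h+6+s) else 0) +
         (if i = 5 + 2*s then gn (5*h+6+s) else 0)) := by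
    intro s hs
    have hs' : s < h := Finset.mem_range.mp hs
    rw [show 5*h+5 + s + 1 = 5*h+6+s by omega, ev_vA_p h s hs', ev_vA_n h s hs']
  rw [Finset.sum_congr rfl step, Finset.sum_add_distrib,
      sum_ite_lin i (4) h (fun s => gp (5*h+6+s)),
      sum_ite_lin i (5) h (fun s => gn (5*h+6+s))]


lemma piece_yB :
    ∑ s ∈ Finset.range h,
      ((if i = pos h (6*h+5 + s + 1) then gp (6*h+5 + s + 1) else 0) +
       (if i = neg h (6*h+5 + s + 1) then gn (6*h+5 + s + 1) else 0))
    = (if 5+2*h ≤ i ∧ i < 5+2*h + 2*h ∧ (i - (5+2*h)) % 2 = 0 then gp (6*h+6 + ((i - (5+2*h))/2)) else 0) +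
      (if 4+2*h ≤ i ∧ i < 4+2*h + 2*h ∧ (i - (4+2*h)) % 2 = 0 then gn (6*h+6 + ((i - (4+2*h))/2)) else 0) := by
  have step : ∀ s ∈ Finset.range h,
      ((if i = pos h (6*h+5 + s + 1) then gp (6*h+5 + s + 1) else 0) +
       (if i = neg h (6*h+5 + s + 1) then gn (6*h+5 + s + 1) else 0))
      = ((if i = 5+2*h + 2*s then gp (6*h+6+s) else 0) +
         (if i = 4+2*h + 2*s then gn (6*h+6+s) else 0)) := by
    intro s hs
    have hs' : s < h := Finset.mem_range.mp hs
    rw [show 6*h+5 + s + 1 = 6*h+6+s by omega, ev_yB_p h s hs', ev_yB_n h s hs']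
  rw [Finset.sum_congr rfl step, Finset.sum_add_distrib,
      sum_ite_lin i (5+2*h) h (fun s => gp (6*h+6+s)),
      sum_ite_lin i (4+2*h) h (fun s => gn (6*h+6+s))]


lemma piece_vB :
    ∑ s ∈ Finset.range h,
      ((if i = pos h (9*h+10 + s + 1) then gp (9*h+10 + s + 1) else 0) +
       (if i = neg h (9*h+10 + s + 1) then gn (9*h+10 + s + 1) else 0))
    = (if 4+2*h ≤ i ∧ i < 4+2*h + 2*h ∧ (i - (4+2*h)) % 2 = 0 then gp (9*h+11 + ((i - (4+2*h))/2)) else 0) +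
      (if 5+2*h ≤ i ∧ i < 5+2*h + 2*h ∧ (i - (5+2*h)) % 2 = 0 then gn (9*h+11 + ((i - (5+2*h))/2)) else 0) := by
  have step : ∀ s ∈ Finset.range h,
      ((if i = pos h (9*h+10 + s + 1) then gp (9*h+10 + s + 1) else 0) +
       (if i = neg h (9*h+10 + s + 1) then gn (9*h+10 + s + 1) else 0))
      = ((if i = 4+2*h + 2*s then gp (9*h+11+s) else 0) +
         (if i = 5+2*h + 2*s then gn (9*h+11+s) else 0)) := by
    intro s hs
    have hs' : s < h := Finset.mem_range.mp hs
    rw [show 9*h+10 + s + 1 = 9*h+11+s by omega, ev_vB_p h s hs', ev_vB_n h s hs']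
  rw [Finset.sum_congr rfl step, Finset.sum_add_distrib,
      sum_ite_lin i (4+2*h) h (fun s => gp (9*h+11+s)),
      sum_ite_lin i (5+2*h) h (fun s => gn (9*h+11+s))]


lemma piece_Z :
    ∑ s ∈ Finset.range (2*h),
      ((if i = pos h (7*h+10 + s + 1) then gp (7*h+10 + s + 1) else 0) +
       (if i = neg h (7*h+10 + s + 1) then gn (7*h+10 + s + 1) else 0))
    = ((if 5+2*h ≤ i ∧ i < 5+2*h + 2*h ∧ (i - (5+2*h)) % 2 = 0 then gp (7*h+11+2*((i - (5+2*h))/2)) else 0) +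
       (if 4+2*h ≤ i ∧ i < 4+2*h + 2*h ∧ (i - (4+2*h)) % 2 = 0 then gn (7*h+11+2*((i - (4+2*h))/2)) else 0)) +
      ((if 5 ≤ i ∧ i < 5 + 2*h ∧ (i - 5) % 2 = 0 then gp (7*h+12+2*((i - 5)/2)) else 0) +
       (if 4 ≤ i ∧ i < 4 + 2*h ∧ (i - 4) % 2 = 0 then gn (7*h+12+2*((i - 4)/2)) else 0)) := by
  rw [sum_range_two_mul]
  have step : ∀ s ∈ Finset.range h,
      (((if i = pos h (7*h+10 + 2*s + 1) then gp (7*h+10 + 2*s + 1) else 0) +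
        (if i = neg h (7*h+10 + 2*s + 1) then gn (7*h+10 + 2*s + 1) else 0)) +
       ((if i = pos h (7*h+10 + (2*s+1) + 1) then gp (7*h+10 + (2*s+1) + 1) else 0) +
        (if i = neg h (7*h+10 + (2*s+1) + 1) then gn (7*h+10 + (2*s+1) + 1) else 0)))
      = (((if i = 5+2*h + 2*s then gp (7*h+11+2*s) else 0) +
          (if i = 4+2*h + 2*s then gn (7*h+11+2*s) else 0)) +
         ((if i = 5 + 2*s then gp (7*h+12+2*s) else 0) +
          (if i = 4 + 2*s then gn (7*h+12+2*s) else 0))) := by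
    intro s hs
    have hs' : s < h := Finset.mem_range.mp hs
    rw [show 7*h+10 + 2*s + 1 = 7*h+11+2*s by omega,
        show 7*h+10 + (2*s+1) + 1 = 7*h+12+2*s by omega,
        ev_zB_p h s hs', ev_zB_n h s hs', ev_zA_p h s hs', ev_zA_n h s hs']
  rw [Finset.sum_congr rfl step, Finset.sum_add_distrib, Finset.sum_add_distrib,
      Finset.sum_add_distrib,
      sum_ite_lin i (5+2*h) h (fun s => gp (7*h+11+2*s)),
      sum_ite_lin i (4+2*h) h (fun s => gn (7*h+11+2*s)),
      sum_ite_lin i 5 h (fun s => gp (7*h+12+2*s)),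
      sum_ite_lin i 4 h (fun s => gn (7*h+12+2*s))]


lemma piece_first2 :
    ∑ j ∈ Finset.range 2,
      ((if i = pos h (j + 1) then gp (j + 1) else 0) +
       (if i = neg h (j + 1) then gn (j + 1) else 0))
    = (((if i = 0 then gp 1 else 0) + (if i = 1 then gn 1 else 0)) +
       ((if i = 2 then gp 2 else 0) + (if i = 3 then gn 2 else 0))) := by
  simp only [Finset.sum_range_succ, Finset.sum_range_zero, zero_add]
  norm_num [ev1p, ev1n, ev2p, ev2n]

lemma piece_Q3 :
    ∑ s ∈ Finset.range 3,
      ((if i = pos h (4*h+2 + s + 1) then gp (4*h+2 + s + 1) else 0) +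
       (if i = neg h (4*h+2 + s + 1) then gn (4*h+2 + s + 1) else 0))
    = ((((if i = 1 then gp (4*h+3) else 0) + (if i = 0 then gn (4*h+3) else 0)) +
        ((if i = 0 then gp (4*h+4) else 0) + (if i = 2 then gn (4*h+4) else 0))) +
       ((if i = 2 then gp (4*h+5) else 0) + (if i = 1 then gn (4*h+5) else 0))) := by
  simp only [Finset.sum_range_succ, Finset.sum_range_zero, zero_add]
  rw [show 4*h+2 + 0 + 1 = 4*h+3 by omega, show 4*h+2 + 1 + 1 = 4*h+4 by omega,
      show 4*h+2 + 2 + 1 = 4*h+5 by omega,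
      evq3p1, evq3n1, evq3p2, evq3n2, evq3p3, evq3n3]

lemma piece_Q5 :
    ∑ s ∈ Finset.range 5,
      ((if i = pos h (7*h+5 + s + 1) then gp (7*h+5 + s + 1) else 0) +
       (if i = neg h (7*h+5 + s + 1) then gn (7*h+5 + s + 1) else 0))
    = (((((( if i = 0 then gp (7*h+6) else 0) + (if i = 1 then gn (7*h+6) else 0)) +
         ((if i = 2 then gp (7*h+7) else 0) + (if i = 3 then gn (7*h+7) else 0))) +
         ((if i = 3 then gp (7*h+8) else 0) + (if i = 0 then gn (7*h+8) else 0))) +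
         ((if i = 1 then gp (7*h+9) else 0) + (if i = 3 then gn (7*h+9) else 0))) +
         ((if i = 3 then gp (7*h+10) else 0) + (if i = 2 then gn (7*h+10) else 0))) := by
  simp only [Finset.sum_range_succ, Finset.sum_range_zero, zero_add]
  rw [show 7*h+5 + 0 + 1 = 7*h+6 by omega, show 7*h+5 + 1 + 1 = 7*h+7 by omega,
      show 7*h+5 + 2 + 1 = 7*h+8 by omega, show 7*h+5 + 3 + 1 = 7*h+9 by omega,
      show 7*h+5 + 4 + 1 = 7*h+10 by omega,
      evq5p1, evq5n1, evq5p2, evq5n2, evq5p3, evq5n3, evq5p4, evq5n4, evq5p5, evq5n5]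

end pieces

lemma sum_range_8 {M : Type*} [AddCommMonoid M] (h : ℕ) (f : ℕ → M) :
    ∑ r ∈ Finset.range (8*(h+1)), f r
      = ∑ u ∈ Finset.range (2*(h+1)), ∑ d ∈ Finset.range 4, f (u*4 + d) := by
  rw [show 8*(h+1) = (2*(h+1))*4 by ring, sum_range_mul]


section tailsec
variable {M : Type*} [AddCommMonoid M]

lemma pos_t3_0 (h w u : ℕ) (hu : u < 2*(h+1)) : pos h (10*h+11 + (w*(8*(h+1)) + (u*4 + 0))) = 2*u := by
  rw [pos_t3 h w u 0 hu (by norm_num)]; norm_num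
lemma pos_t3_1 (h w u : ℕ) (hu : u < 2*(h+1)) : pos h (10*h+11 + (w*(8*(h+1)) + (u*4 + 1))) = 2*u + 1 := by
  rw [pos_t3 h w u 1 hu (by norm_num)]; norm_num
lemma pos_t3_2 (h w u : ℕ) (hu : u < 2*(h+1)) : pos h (10*h+11 + (w*(8*(h+1)) + (u*4 + 2))) = 2*u + 1 := by
  rw [pos_t3 h w u 2 hu (by norm_num)]; norm_num
lemma pos_t3_3 (h w u : ℕ) (hu : u < 2*(h+1)) : pos h (10*h+11 + (w*(8*(h+1)) + (u*4 + 3))) = 2*u := by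
  rw [pos_t3 h w u 3 hu (by norm_num)]; norm_num
lemma neg_t3_0 (h w u : ℕ) (hu : u < 2*(h+1)) : neg h (10*h+11 + (w*(8*(h+1)) + (u*4 + 0))) = 2*u + 1 := by
  rw [neg_t3 h w u 0 hu (by norm_num)]; norm_num
lemma neg_t3_1 (h w u : ℕ) (hu : u < 2*(h+1)) : neg h (10*h+11 + (w*(8*(h+1)) + (u*4 + 1))) = 2*u := by
  rw [neg_t3 h w u 1 hu (by norm_num)]; norm_num
lemma neg_t3_2 (h w u : ℕ) (hu : u < 2*(h+1)) : neg h (10*h+11 + (w*(8*(h+1)) + (u*4 + 2))) = 2*u := by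
  rw [neg_t3 h w u 2 hu (by norm_num)]; norm_num
lemma neg_t3_3 (h w u : ℕ) (hu : u < 2*(h+1)) : neg h (10*h+11 + (w*(8*(h+1)) + (u*4 + 3))) = 2*u + 1 := by
  rw [neg_t3 h w u 3 hu (by norm_num)]; norm_num

lemma tail (h e i : ℕ) (gp gn : ℕ → M) :
    ∑ t ∈ Finset.range (e*(8*(h+1))),
      ((if i = pos h (10*h+10 + t + 1) then gp (10*h+10 + t + 1) else 0) +
       (if i = neg h (10*h+10 + t + 1) then gn (10*h+10 + t + 1) else 0))
    = ∑ w ∈ Finset.range e,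
       (((((if i < 2*(2*(h+1)) ∧ i % 2 = 0 then gp (10*h+11 + (w*(8*(h+1)) + ((i/2)*4 + 0))) else 0) + (if i < 2*(2*(h+1)) + 1 ∧ i % 2 = 1 then gn (10*h+11 + (w*(8*(h+1)) + ((i/2)*4 + 0))) else 0)) +
        ((if i < 2*(2*(h+1)) + 1 ∧ i % 2 = 1 then gp (10*h+11 + (w*(8*(h+1)) + ((i/2)*4 + 1))) else 0) + (if i < 2*(2*(h+1)) ∧ i % 2 = 0 then gn (10*h+11 + (w*(8*(h+1)) + ((i/2)*4 + 1))) else 0))) +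
        ((if i < 2*(2*(h+1)) + 1 ∧ i % 2 = 1 then gp (10*h+11 + (w*(8*(h+1)) + ((i/2)*4 + 2))) else 0) + (if i < 2*(2*(h+1)) ∧ i % 2 = 0 then gn (10*h+11 + (w*(8*(h+1)) + ((i/2)*4 + 2))) else 0))) +
        ((if i < 2*(2*(h+1)) ∧ i % 2 = 0 then gp (10*h+11 + (w*(8*(h+1)) + ((i/2)*4 + 3))) else 0) + (if i < 2*(2*(h+1)) + 1 ∧ i % 2 = 1 then gn (10*h+11 + (w*(8*(h+1)) + ((i/2)*4 + 3))) else 0))) := by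
  rw [sum_range_mul]
  refine Finset.sum_congr rfl (fun w hw => ?_)
  rw [sum_range_8]
  have step : ∀ u ∈ Finset.range (2*(h+1)),
      (∑ d ∈ Finset.range 4,
        ((if i = pos h (10*h+10 + (w*(8*(h+1)) + (u*4 + d)) + 1) then gp (10*h+10 + (w*(8*(h+1)) + (u*4 + d)) + 1) else 0) +
         (if i = neg h (10*h+10 + (w*(8*(h+1)) + (u*4 + d)) + 1) then gn (10*h+10 + (w*(8*(h+1)) + (u*4 + d)) + 1) else 0)))
      = ((((if i = 2*u then gp (10*h+11 + (w*(8*(h+1)) + (u*4 + 0))) else 0) + (if i = 2*u + 1 then gn (10*h+11 + (w*(8*(h+1)) + (u*4 + 0))) else 0)) +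
         ((if i = 2*u + 1 then gp (10*h+11 + (w*(8*(h+1)) + (u*4 + 1))) else 0) + (if i = 2*u then gn (10*h+11 + (w*(8*(h+1)) + (u*4 + 1))) else 0))) +
         ((if i = 2*u + 1 then gp (10*h+11 + (w*(8*(h+1)) + (u*4 + 2))) else 0) + (if i = 2*u then gn (10*h+11 + (w*(8*(h+1)) + (u*4 + 2))) else 0))) +
         ((if i = 2*u then gp (10*h+11 + (w*(8*(h+1)) + (u*4 + 3))) else 0) + (if i = 2*u + 1 then gn (10*h+11 + (w*(8*(h+1)) + (u*4 + 3))) else 0)) := by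
    intro u hu
    have hu' : u < 2*(h+1) := Finset.mem_range.mp hu
    simp only [Finset.sum_range_succ, Finset.sum_range_zero, zero_add]
    rw [show 10*h+10 + (w*(8*(h+1)) + (u*4 + 0)) + 1 = 10*h+11 + (w*(8*(h+1)) + (u*4 + 0)) by ring,
        show 10*h+10 + (w*(8*(h+1)) + (u*4 + 1)) + 1 = 10*h+11 + (w*(8*(h+1)) + (u*4 + 1)) by ring,
        show 10*h+10 + (w*(8*(h+1)) + (u*4 + 2)) + 1 = 10*h+11 + (w*(8*(h+1)) + (u*4 + 2)) by ring,
        show 10*h+10 + (w*(8*(h+1)) + (u*4 + 3)) + 1 = 10*h+11 + (w*(8*(h+1)) + (u*4 + 3)) by ring,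
        pos_t3_0 h w u hu', pos_t3_1 h w u hu', pos_t3_2 h w u hu', pos_t3_3 h w u hu',
        neg_t3_0 h w u hu', neg_t3_1 h w u hu', neg_t3_2 h w u hu', neg_t3_3 h w u hu']
  rw [Finset.sum_congr rfl step]
  simp only [Finset.sum_add_distrib]
  rw [sum_ite_lin0 i (2*(h+1)) (fun u => gp (10*h+11 + (w*(8*(h+1)) + (u*4 + 0)))),
      sum_ite_lin1 i (2*(h+1)) (fun u => gn (10*h+11 + (w*(8*(h+1)) + (u*4 + 0)))),
      sum_ite_lin1 i (2*(h+1)) (fun u => gp (10*h+11 + (w*(8*(h+1)) + (u*4 + 1)))),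
      sum_ite_lin0 i (2*(h+1)) (fun u => gn (10*h+11 + (w*(8*(h+1)) + (u*4 + 1)))),
      sum_ite_lin1 i (2*(h+1)) (fun u => gp (10*h+11 + (w*(8*(h+1)) + (u*4 + 2)))),
      sum_ite_lin0 i (2*(h+1)) (fun u => gn (10*h+11 + (w*(8*(h+1)) + (u*4 + 2)))),
      sum_ite_lin0 i (2*(h+1)) (fun u => gp (10*h+11 + (w*(8*(h+1)) + (u*4 + 3)))),
      sum_ite_lin1 i (2*(h+1)) (fun u => gn (10*h+11 + (w*(8*(h+1)) + (u*4 + 3))))]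

end tailsec


section master
lemma peel {M : Type*} [AddCommMonoid M] (f : ℕ → M) (X L : ℕ) {N : ℕ} (hN : N = X + L) :
    ∑ j ∈ Finset.range N, f j
      = ∑ j ∈ Finset.range X, f j + ∑ s ∈ Finset.range L, f (X + s) := by
  subst hN; exact Finset.sum_range_add f X L

lemma tailR1 (h e i : ℕ) :
    (∑ w ∈ Finset.range e, (((((if i < 2*(2*(h+1)) ∧ i % 2 = 0 then (((10*h+11 + (w*(8*(h+1)) + ((i/2)*4 + 0))) : ℕ) : ℤ) else 0) + (if i < 2*(2*(h+1)) + 1 ∧ i % 2 = 1 then -(((10*h+11 + (w*(8*(h+1)) + ((i/2)*4 + 0))) : ℕ) : ℤ) else 0)) +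
        ((if i < 2*(2*(h+1)) + 1 ∧ i % 2 = 1 then (((10*h+11 + (w*(8*(h+1)) + ((i/2)*4 + 1))) : ℕ) : ℤ) else 0) + (if i < 2*(2*(h+1)) ∧ i % 2 = 0 then -(((10*h+11 + (w*(8*(h+1)) + ((i/2)*4 + 1))) : ℕ) : ℤ) else 0))) +
        ((if i < 2*(2*(h+1)) + 1 ∧ i % 2 = 1 then (((10*h+11 + (w*(8*(h+1)) + ((i/2)*4 + 2))) : ℕ) : ℤ) else 0) + (if i < 2*(2*(h+1)) ∧ i % 2 = 0 then -(((10*h+11 + (w*(8*(h+1)) + ((i/2)*4 + 2))) : ℕ) : ℤ) else 0))) +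
        ((if i < 2*(2*(h+1)) ∧ i % 2 = 0 then (((10*h+11 + (w*(8*(h+1)) + ((i/2)*4 + 3))) : ℕ) : ℤ) else 0) + (if i < 2*(2*(h+1)) + 1 ∧ i % 2 = 1 then -(((10*h+11 + (w*(8*(h+1)) + ((i/2)*4 + 3))) : ℕ) : ℤ) else 0)))) = 0 := by
  apply Finset.sum_eq_zero
  intro w _
  split_ifs <;> push_cast <;> ring

lemma tailR2 (h e i : ℕ) (hi : i < 4*h+4) :
    (∑ w ∈ Finset.range e, (((((if i < 2*(2*(h+1)) ∧ i % 2 = 0 then (1 : ℕ) else 0) + (if i < 2*(2*(h+1)) + 1 ∧ i % 2 = 1 then (1 : ℕ) else 0)) +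
        ((if i < 2*(2*(h+1)) + 1 ∧ i % 2 = 1 then (1 : ℕ) else 0) + (if i < 2*(2*(h+1)) ∧ i % 2 = 0 then (1 : ℕ) else 0))) +
        ((if i < 2*(2*(h+1)) + 1 ∧ i % 2 = 1 then (1 : ℕ) else 0) + (if i < 2*(2*(h+1)) ∧ i % 2 = 0 then (1 : ℕ) else 0))) +
        ((if i < 2*(2*(h+1)) ∧ i % 2 = 0 then (1 : ℕ) else 0) + (if i < 2*(2*(h+1)) + 1 ∧ i % 2 = 1 then (1 : ℕ) else 0)))) = e*4 := by
  rw [Finset.sum_congr rfl (fun w _ => show _ = 4 by split_ifs <;> omega)]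
  simp [Finset.sum_const, Finset.card_range, Nat.smul_one_eq_cast]

set_option maxHeartbeats 3000000 in
lemma master_sum (h e i : ℕ) :
    ∑ j ∈ Finset.range (10*h+10 + e*(8*(h+1))),
      ((if i = pos h (j+1) then ((j+1 : ℕ) : ℤ) else 0) +
       (if i = neg h (j+1) then -((j+1 : ℕ) : ℤ) else 0)) = 0 := by
  rw [peel _ (10*h+10) (e*(8*(h+1))) rfl]
  rw [peel _ (9*h+10) (h) (by omega),
      peel _ (7*h+10) (2*h) (by omega),
      peel _ (7*h+5) (5) (by omega),
      peel _ (6*h+5) (h) (by omega),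
      peel _ (5*h+5) (h) (by omega),
      peel _ (4*h+5) (h) (by omega),
      peel _ (4*h+2) (3) (by omega),
      peel _ (3*h+2) (h) (by omega),
      peel _ (2*h+2) (h) (by omega),
      peel _ (h+2) (h) (by omega),
      peel _ (2) (h) (by omega)]
  rw [piece_first2 h i (fun v => ((v : ℕ) : ℤ)) (fun v => -((v : ℕ) : ℤ)), piece_wA h i (fun v => ((v : ℕ) : ℤ)) (fun v => -((v : ℕ) : ℤ)), piece_xB h i (fun v => ((v : ℕ) : ℤ)) (fun v => -((v : ℕ) : ℤ)), piece_yA h i (fun v => ((v : ℕ) : ℤ)) (fun v => -((v : ℕ) : ℤ)), piece_wB h i (fun v => ((v : ℕ) : ℤ)) (fun v => -((v : ℕ) : ℤ)),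
      piece_Q3 h i (fun v => ((v : ℕ) : ℤ)) (fun v => -((v : ℕ) : ℤ)), piece_xA h i (fun v => ((v : ℕ) : ℤ)) (fun v => -((v : ℕ) : ℤ)), piece_vA h i (fun v => ((v : ℕ) : ℤ)) (fun v => -((v : ℕ) : ℤ)), piece_yB h i (fun v => ((v : ℕ) : ℤ)) (fun v => -((v : ℕ) : ℤ)), piece_Q5 h i (fun v => ((v : ℕ) : ℤ)) (fun v => -((v : ℕ) : ℤ)),
      piece_Z h i (fun v => ((v : ℕ) : ℤ)) (fun v => -((v : ℕ) : ℤ)), piece_vB h i (fun v => ((v : ℕ) : ℤ)) (fun v => -((v : ℕ) : ℤ)), tail h e i (fun v => ((v : ℕ) : ℤ)) (fun v => -((v : ℕ) : ℤ)), tailR1 h e i]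
  split_ifs <;> omega

set_option maxHeartbeats 3000000 in
lemma master_cnt (h e i : ℕ) (hi : i < 4*h+4) :
    ∑ j ∈ Finset.range (10*h+10 + e*(8*(h+1))),
      ((if i = pos h (j+1) then (1:ℕ) else 0) +
       (if i = neg h (j+1) then (1:ℕ) else 0)) = 4*(e+1)+1 := by
  rw [peel _ (10*h+10) (e*(8*(h+1))) rfl]
  rw [peel _ (9*h+10) (h) (by omega),
      peel _ (7*h+10) (2*h) (by omega),
      peel _ (7*h+5) (5) (by omega),
      peel _ (6*h+5) (h) (by omega),
      peel _ (5*h+5) (h) (by omega),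
      peel _ (4*h+5) (h) (by omega),
      peel _ (4*h+2) (3) (by omega),
      peel _ (3*h+2) (h) (by omega),
      peel _ (2*h+2) (h) (by omega),
      peel _ (h+2) (h) (by omega),
      peel _ (2) (h) (by omega)]
  rw [piece_first2 h i (fun _ => (1:ℕ)) (fun _ => (1:ℕ)), piece_wA h i (fun _ => (1:ℕ)) (fun _ => (1:ℕ)), piece_xB h i (fun _ => (1:ℕ)) (fun _ => (1:ℕ)), piece_yA h i (fun _ => (1:ℕ)) (fun _ => (1:ℕ)), piece_wB h i (fun _ => (1:ℕ)) (fun _ => (1:ℕ)),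
      piece_Q3 h i (fun _ => (1:ℕ)) (fun _ => (1:ℕ)), piece_xA h i (fun _ => (1:ℕ)) (fun _ => (1:ℕ)), piece_vA h i (fun _ => (1:ℕ)) (fun _ => (1:ℕ)), piece_yB h i (fun _ => (1:ℕ)) (fun _ => (1:ℕ)), piece_Q5 h i (fun _ => (1:ℕ)) (fun _ => (1:ℕ)),
      piece_Z h i (fun _ => (1:ℕ)) (fun _ => (1:ℕ)), piece_vB h i (fun _ => (1:ℕ)) (fun _ => (1:ℕ)), tail h e i (fun _ => (1:ℕ)) (fun _ => (1:ℕ)), tailR2 h e i hi]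
  split_ifs <;> omega

end master


section assemble

def cell (h i v : ℕ) : Option ℤ :=
  if i = pos h v then some ((v : ℕ) : ℤ)
  else if i = neg h v then some (-((v : ℕ) : ℤ))
  else none

lemma cell_isSome_iff (h i v : ℕ) :
    (cell h i v).isSome = true ↔ (i = pos h v ∨ i = neg h v) := by
  unfold cell; split_ifs <;> simp_all

lemma cell_getD (h i v : ℕ) (hv : 1 ≤ v) :
    (cell h i v).getD 0
      = (if i = pos h v then ((v : ℕ) : ℤ) else 0) +
        (if i = neg h v then -((v : ℕ) : ℤ) else 0) := by
  have hne := (bounds h v hv).2.2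
  unfold cell; split_ifs <;> simp_all

lemma cell_cnt (h i v : ℕ) (hv : 1 ≤ v) :
    (if (cell h i v).isSome then (1:ℕ) else 0)
      = (if i = pos h v then (1:ℕ) else 0) + (if i = neg h v then (1:ℕ) else 0) := by
  have hne := (bounds h v hv).2.2
  unfold cell; split_ifs <;> simp_all

lemma cell_some (h i v : ℕ) (hv : 1 ≤ v) (x : ℤ) :
    cell h i v = some x ↔
      ((i = pos h v ∧ x = ((v:ℕ):ℤ)) ∨ (i = neg h v ∧ x = -((v:ℕ):ℤ))) := by
  have hne := (bounds h v hv).2.2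
  unfold cell
  split_ifs with h1 h2 <;> simp_all [eq_comm]

end assemble

end SMR12


open SMR12 in
set_option maxHeartbeats 1000000 in
theorem stmt_12 (a b : ℕ) (ha : 1 ≤ a) (hb : 1 ≤ b) :
    SMR (4 * b) (2 * b * (4 * a + 1)) (4 * a + 1) 2 := by
  obtain ⟨e, rfl⟩ : ∃ e, a = e + 1 := ⟨a - 1, by omega⟩
  obtain ⟨h, rfl⟩ : ∃ h, b = h + 1 := ⟨b - 1, by omega⟩
  have hn : 2 * (h+1) * (4 * (e+1) + 1) = 10*h+10 + e*(8*(h+1)) := by ring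
  have hmod : ¬ (4 * (h+1) * (4 * (e+1) + 1) % 2 = 1) := by
    rw [show 4 * (h+1) * (4 * (e+1) + 1) = 2*(2*(h+1)*(4*(e+1)+1)) by ring]
    simp [Nat.mul_mod_right]
  have hdiv : ((4 * (h+1) : ℕ) : ℤ) * ((4 * (e+1) + 1 : ℕ) : ℤ) / 2
      = ((2 * (h+1) * (4 * (e+1) + 1) : ℕ) : ℤ) := by
    push_cast
    rw [show ((4:ℤ)*((h:ℤ)+1))*(4*((e:ℤ)+1)+1) = 2*(2*((h:ℤ)+1)*(4*((e:ℤ)+1)+1)) by ring]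
    rw [Int.mul_ediv_cancel_left _ (by norm_num)]
  refine ⟨fun i j => cell h (i:ℕ) ((j:ℕ)+1), ?_, ?_, ?_, ?_, ?_, ?_⟩
  · -- row counts
    intro i
    rw [Finset.card_filter,
        Fin.sum_univ_eq_sum_range (fun jn => if (cell h (i:ℕ) (jn+1)).isSome then (1:ℕ) else 0),
        Finset.sum_congr rfl (fun jn _ => cell_cnt h (i:ℕ) (jn+1) (by omega)),
        hn]
    exact master_cnt h e (i:ℕ) (by omega)
  · -- column counts
    intro j
    beta_reduce
    have hv : 1 ≤ (j:ℕ)+1 := by omega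
    have hb2 := bounds h ((j:ℕ)+1) hv
    apply Finset.card_eq_two.mpr
    refine ⟨⟨SMR12.pos h ((j:ℕ)+1), by omega⟩, ⟨SMR12.neg h ((j:ℕ)+1), by omega⟩,
      by simp [Fin.ext_iff]; omega, ?_⟩
    ext i
    simp [cell_isSome_iff, Fin.ext_iff]
  · -- entries are values
    intro i j x hx
    rw [cell_some h _ _ (by omega) x] at hx
    unfold SMRvalue
    rw [if_neg hmod, hdiv]
    have hj : (j:ℕ) < 2 * (h+1) * (4 * (e+1) + 1) := j.isLt
    rcases hx with ⟨_, rfl⟩ | ⟨_, rfl⟩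
    · constructor
      · intro hc; rw [Int.natCast_eq_zero] at hc; omega
      · rw [abs_of_nonneg (by positivity)]
        exact_mod_cast by omega
    · constructor
      · intro hc
        rw [neg_eq_zero, Int.natCast_eq_zero] at hc; omega
      · rw [abs_neg, abs_of_nonneg (by positivity)]
        exact_mod_cast by omega
  · -- every value appears exactly once
    intro x hx
    unfold SMRvalue at hx
    rw [if_neg hmod, hdiv] at hx
    obtain ⟨hx0, hxb⟩ := hx
    rw [Int.abs_eq_natAbs] at hxb
    set v := x.natAbs with hvdef
    have hv1 : 1 ≤ v := by
      rcases Int.natAbs_pos.mpr hx0 with hp; omega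
    have hvn : v ≤ 2 * (h+1) * (4 * (e+1) + 1) := by exact_mod_cast hxb
    have hbv := bounds h v hv1
    rcases lt_or_gt_of_ne hx0 with hneg | hpos
    · -- x < 0 : located at (neg row, column v-1)
      have hxv : x = -((v:ℕ):ℤ) := by
        rw [hvdef]; rw [Int.ofNat_natAbs_of_nonpos (le_of_lt hneg)]; ring
      refine ⟨(⟨SMR12.neg h v, by omega⟩, ⟨v-1, by omega⟩), ?_, ?_⟩
      · show cell h _ _ = some x
        simp only
        rw [show (v-1)+1 = v by omega, cell_some h _ _ hv1]
        right; exact ⟨rfl, hxv⟩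
      · rintro ⟨qi, qj⟩ hq
        simp only at hq
        rw [cell_some h _ _ (by omega)] at hq
        rcases hq with ⟨hq1, hq2⟩ | ⟨hq1, hq2⟩
        · exfalso; have : (0:ℤ) < ((qj:ℕ)+1 : ℕ) := by positivity
          omega
        · have hjv : (qj:ℕ)+1 = v := by
            omega
          have hq1' : (qi:ℕ) = SMR12.neg h v := by rw [hq1, hjv]
          refine Prod.ext ?_ ?_ <;> simp [Fin.ext_iff] <;> omega
    · -- x > 0
      have hxv : x = ((v:ℕ):ℤ) := by
        rw [hvdef, Int.natAbs_of_nonneg (le_of_lt hpos)]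
      refine ⟨(⟨SMR12.pos h v, by omega⟩, ⟨v-1, by omega⟩), ?_, ?_⟩
      · show cell h _ _ = some x
        simp only
        rw [show (v-1)+1 = v by omega, cell_some h _ _ hv1]
        left; exact ⟨rfl, hxv⟩
      · rintro ⟨qi, qj⟩ hq
        simp only at hq
        rw [cell_some h _ _ (by omega)] at hq
        rcases hq with ⟨hq1, hq2⟩ | ⟨hq1, hq2⟩
        · have hjv : (qj:ℕ)+1 = v := by
            omega
          have hq1' : (qi:ℕ) = SMR12.pos h v := by rw [hq1, hjv]
          refine Prod.ext ?_ ?_ <;> simp [Fin.ext_iff] <;> omega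
        · exfalso; have : (0:ℤ) < ((qj:ℕ)+1 : ℕ) := by positivity
          omega
  · -- row sums
    intro i
    rw [Fin.sum_univ_eq_sum_range (fun jn => (cell h (i:ℕ) (jn+1)).getD 0),
        Finset.sum_congr rfl (fun jn _ => cell_getD h (i:ℕ) (jn+1) (by omega)),
        hn]
    exact master_sum h e (i:ℕ)
  · -- column sums
    intro j
    beta_reduce
    have hv : 1 ≤ (j:ℕ)+1 := by omega
    have hb2 := bounds h ((j:ℕ)+1) hv
    have hPlt : SMR12.pos h ((j:ℕ)+1) < 4*(h+1) := by omega
    have hNlt : SMR12.neg h ((j:ℕ)+1) < 4*(h+1) := by omega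
    have step : ∀ i : Fin (4*(h+1)), (cell h (i:ℕ) ((j:ℕ)+1)).getD 0
        = (if i = (⟨SMR12.pos h ((j:ℕ)+1), hPlt⟩ : Fin (4*(h+1))) then (((j:ℕ)+1 : ℕ) : ℤ) else 0) +
          (if i = (⟨SMR12.neg h ((j:ℕ)+1), hNlt⟩ : Fin (4*(h+1))) then -(((j:ℕ)+1 : ℕ) : ℤ) else 0) := by
      intro i
      rw [cell_getD h (i:ℕ) ((j:ℕ)+1) hv]
      congr 1
      · exact if_congr (by simp [Fin.ext_iff]) rfl rfl
      · exact if_congr (by simp [Fin.ext_iff]) rfl rfl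
    rw [Finset.sum_congr rfl (fun i _ => step i), Finset.sum_add_distrib,
        Finset.sum_ite_eq' Finset.univ _ (fun _ => (((j:ℕ)+1 : ℕ) : ℤ)),
        Finset.sum_ite_eq' Finset.univ _ (fun _ => -(((j:ℕ)+1 : ℕ) : ℤ))]
    simp
end

section
/- If there exists a signed magic rectangle SMR(2,n;n,2), then n ≡ 0 or 3 (mod 4). -/
lemma gauss_aux (n : ℕ) : 2 * ∑ k ∈ Finset.Icc (1:ℤ) (n:ℤ), k = n * (n+1) := by
  induction n with
  | zero => simp
  | succ m ih =>
    have h1 : ((m+1:ℕ):ℤ) = (m:ℤ) + 1 := by push_cast; ring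
    have h2 : Finset.Icc (1:ℤ) ((m:ℤ)+1) = insert ((m:ℤ)+1) (Finset.Icc (1:ℤ) (m:ℤ)) := by
      ext x
      simp only [Finset.mem_Icc, Finset.mem_insert]
      omega
    have h3 : ((m:ℤ)+1) ∉ Finset.Icc (1:ℤ) (m:ℤ) := by
      simp only [Finset.mem_Icc]; omega
    rw [h1, h2, Finset.sum_insert h3]
    linarith

theorem stmt_15 (n : ℕ) (h : SMR 2 n n 2) : n % 4 = 0 ∨ n % 4 = 3 := by
  obtain ⟨A, hr, hc, hv, hu, hrs, hcs⟩ := h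
  set B : Fin 2 → Fin n → ℤ := fun i j => (A i j).getD 0 with hBdef
  have hfill : ∀ i j, (A i j).isSome := by
    intro i j
    have h2 : (Finset.univ.filter fun j => (A i j).isSome) = Finset.univ :=
      Finset.eq_univ_of_card _ (by simpa using hr i)
    have hj : j ∈ Finset.univ.filter fun j => (A i j).isSome := by
      rw [h2]; exact Finset.mem_univ j
    simpa using hj
  have hB : ∀ i j, A i j = some (B i j) := by
    intro i j
    obtain ⟨x, hx⟩ := Option.isSome_iff_exists.mp (hfill i j)
    simp [hBdef, hx]
  have hval : ∀ i j, B i j ≠ 0 ∧ |B i j| ≤ (n:ℤ) := by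
    intro i j
    have := hv i j _ (hB i j)
    unfold SMRvalue at this
    have h2 : (2 * n) % 2 = 0 := by omega
    rw [if_neg (by omega)] at this
    refine ⟨this.1, ?_⟩
    have := this.2
    have h3 : ((2:ℕ):ℤ) * (n:ℤ) / 2 = (n:ℤ) := by
      push_cast; omega
    rwa [h3] at this
  have hcol : ∀ j, B 1 j = -B 0 j := by
    intro j
    have := hcs j
    rw [Fin.sum_univ_two] at this
    show (A 1 j).getD 0 = -((A 0 j).getD 0)
    linarith
  have hinj : ∀ j j' : Fin n, |B 0 j| = |B 0 j'| → j = j' := by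
    intro j j' habs
    obtain ⟨p, hp, hup⟩ := hu (B 0 j) (hv 0 j _ (hB 0 j))
    rcases abs_eq_abs.mp habs with heq | heq
    · have h1 := hup (0, j) (hB 0 j)
      have h2 := hup (0, j') (by rw [heq]; exact hB 0 j')
      have := h1.trans h2.symm
      exact (Prod.mk.injEq _ _ _ _ ▸ this).2
    · exfalso
      have h1 := hup (0, j) (hB 0 j)
      have h2 : A 1 j' = some (B 0 j) := by
        rw [hB 1 j', hcol j', ← heq]
      have := (h1.trans (hup (1, j') h2).symm)
      have := congrArg Prod.fst this
      simp at this
  have habs1 : ∀ j, 1 ≤ |B 0 j| := fun j => Int.one_le_abs (hval 0 j).1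
  -- image of abs is Icc 1 n
  have hsub : (Finset.univ.image fun j => |B 0 j|) ⊆ Finset.Icc (1:ℤ) (n:ℤ) := by
    intro x hx
    simp only [Finset.mem_image] at hx
    obtain ⟨j, _, rfl⟩ := hx
    exact Finset.mem_Icc.mpr ⟨habs1 j, (hval 0 j).2⟩
  have hcard : (Finset.univ.image fun j => |B 0 j|).card = n := by
    rw [Finset.card_image_of_injective _ (fun a b => hinj a b)]
    simp
  have himg : (Finset.univ.image fun j => |B 0 j|) = Finset.Icc (1:ℤ) (n:ℤ) := by
    apply Finset.eq_of_subset_of_card_le hsub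
    rw [hcard]
    simp [Int.card_Icc]
  have hsum_eq : ∑ j, |B 0 j| = ∑ k ∈ Finset.Icc (1:ℤ) (n:ℤ), k := by
    rw [← himg, Finset.sum_image (fun a _ b _ => hinj a b)]
  have hdvd : (2:ℤ) ∣ ∑ j, |B 0 j| := by
    have hsplit : ∑ j, |B 0 j| = (∑ j, B 0 j) + ∑ j, (|B 0 j| - B 0 j) := by
      rw [← Finset.sum_add_distrib]; apply Finset.sum_congr rfl; intros; ring
    have hrow : ∑ j, B 0 j = 0 := by
      have := hrs 0
      simpa [hBdef] using this
    rw [hsplit, hrow, zero_add]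
    apply Finset.dvd_sum
    intro j _
    rcases abs_choice (B 0 j) with hh | hh
    · simp [hh]
    · rw [hh]; exact ⟨-(B 0 j), by ring⟩
  have hdvd4 : (4:ℤ) ∣ (n:ℤ) * ((n:ℤ) + 1) := by
    obtain ⟨k, hk⟩ := hdvd
    rw [hsum_eq] at hk
    have := gauss_aux n
    rw [hk] at this
    exact ⟨k, by linarith⟩
  have hdvd4' : 4 ∣ n * (n + 1) := by
    have : ((4:ℕ):ℤ) ∣ ((n * (n+1) : ℕ) : ℤ) := by push_cast; exact_mod_cast hdvd4
    exact_mod_cast this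
  obtain ⟨k, hk⟩ := hdvd4'
  have h5 : (n % 4) * ((n + 1) % 4) % 4 = 0 := by
    rw [← Nat.mul_mod]
    omega
  have ha : n % 4 = 0 ∨ n % 4 = 1 ∨ n % 4 = 2 ∨ n % 4 = 3 := by omega
  rcases ha with hh | hh | hh | hh <;> rw [hh] at h5 ⊢ <;> omega
end

section
/- For all integers a, b ≥ 1, there exists a shiftable signed magic rectangle SMR(4b+2, (2a+1)(4b+2); 4a+2, 2). -/
open Finset

theorem buildSMR (m n s0 : ℕ) (hm : 0 < m) (hmn : m * s0 = n)
    (p q v : ℕ → ℕ)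
    (hpm : ∀ j, j < n → p j < m)
    (hqm : ∀ j, j < n → q j < m)
    (hpq : ∀ j, j < n → p j ≠ q j)
    (hv1 : ∀ j, j < n → 1 ≤ v j ∧ v j ≤ n)
    (hvinj : ∀ j j', j < n → j' < n → v j = v j' → j = j')
    (hcp : ∀ i, i < m → (((Finset.range n).filter (fun j => p j = i)).card = s0))
    (hcq : ∀ i, i < m → (((Finset.range n).filter (fun j => q j = i)).card = s0))
    (hsum : ∀ i, i < m →
      ((Finset.range n).filter (fun j => p j = i)).sum v =
      ((Finset.range n).filter (fun j => q j = i)).sum v) :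
    ShiftableSMR m n (2 * s0) 2 := by
  classical
  set A : Fin m → Fin n → Option ℤ := fun i j =>
    if p (j : ℕ) = (i : ℕ) then some ((v (j : ℕ) : ℤ))
    else if q (j : ℕ) = (i : ℕ) then some (-(v (j : ℕ) : ℤ)) else none with hA
  -- basic facts
  have hsome : ∀ (i : Fin m) (j : Fin n),
      (A i j).isSome ↔ (p (j:ℕ) = (i:ℕ) ∨ q (j:ℕ) = (i:ℕ)) := by
    intro i j
    simp only [hA]
    split_ifs with h1 h2 <;> simp_all
  have hgetD : ∀ (i : Fin m) (j : Fin n), (A i j).getD 0 =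
      (if p (j:ℕ) = (i:ℕ) then ((v (j:ℕ) : ℤ)) else 0) +
      (if q (j:ℕ) = (i:ℕ) then (-(v (j:ℕ) : ℤ)) else 0) := by
    intro i j
    have hne := hpq (j:ℕ) j.2
    simp only [hA]
    split_ifs with h1 h2 <;> first
      | (exfalso; exact hne (h1.trans h2.symm))
      | simp
  -- translation between Fin filters and range filters
  have cardFin : ∀ (P : ℕ → Prop) [DecidablePred P],
      ((univ : Finset (Fin n)).filter (fun j : Fin n => P (j:ℕ))).card =
      ((range n).filter P).card := by
    intro P _
    rw [Finset.card_filter, Finset.card_filter]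
    exact Fin.sum_univ_eq_sum_range (fun j => if P j then 1 else 0) n
  have sumFin : ∀ (P : ℕ → Prop) [DecidablePred P] (f : ℕ → ℤ),
      (∑ j : Fin n, if P (j:ℕ) then f (j:ℕ) else 0) =
      ((range n).filter P).sum f := by
    intro P _ f
    rw [Finset.sum_filter]
    exact Fin.sum_univ_eq_sum_range (fun j => if P j then f j else 0) n
  -- positivity of v
  have hvpos : ∀ j : Fin n, (0:ℤ) < (v (j:ℕ) : ℤ) := by
    intro j
    exact_mod_cast (hv1 (j:ℕ) j.2).1
  refine ⟨A, ⟨?_, ?_, ?_, ?_, ?_, ?_⟩, ?_, ?_⟩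
  · -- row counts
    intro i
    have : (univ : Finset (Fin n)).filter (fun j : Fin n => (A i j).isSome) =
        ((univ : Finset (Fin n)).filter (fun j : Fin n => p (j:ℕ) = (i:ℕ))) ∪
        ((univ : Finset (Fin n)).filter (fun j : Fin n => q (j:ℕ) = (i:ℕ))) := by
      rw [← Finset.filter_or]
      exact Finset.filter_congr (fun j _ => by rw [hsome i j])
    rw [this, Finset.card_union_of_disjoint, cardFin (fun j => p j = (i:ℕ)), cardFin (fun j => q j = (i:ℕ)), hcp _ i.2, hcq _ i.2]
    · ring
    · rw [Finset.disjoint_filter]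
      intro j _ h1 h2
      exact hpq (j:ℕ) j.2 (h1.trans h2.symm)
  · -- column counts
    intro j
    have : (univ : Finset (Fin m)).filter (fun i : Fin m => (A i j).isSome) =
        {⟨p (j:ℕ), hpm _ j.2⟩, ⟨q (j:ℕ), hqm _ j.2⟩} := by
      ext i
      simp only [Finset.mem_filter, Finset.mem_univ, true_and, Finset.mem_insert,
        Finset.mem_singleton, hsome i j, Fin.ext_iff]
      constructor
      · rintro (h | h) <;> [left; right] <;> exact h.symm
      · rintro (h | h) <;> [left; right] <;> exact h.symm
    rw [this, Finset.card_insert_of_notMem (by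
      simp only [Finset.mem_singleton, Fin.ext_iff]
      exact hpq (j:ℕ) j.2), Finset.card_singleton]
  · -- entries are values
    intro i j x hx
    have hmul : m * (2 * s0) = 2 * n := by rw [← hmn]; ring
    have hmod : m * (2 * s0) % 2 = 0 := by omega
    have hdiv : (m : ℤ) * ((2 * s0 : ℕ) : ℤ) / 2 = (n : ℤ) := by
      have : (m : ℤ) * ((2 * s0 : ℕ) : ℤ) = 2 * n := by exact_mod_cast hmul
      omega
    rw [SMRvalue, if_neg (by omega), hdiv]
    have hb := hv1 (j:ℕ) j.2
    have hb1 : (0:ℤ) < (v (j:ℕ):ℤ) := by exact_mod_cast hb.1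
    have hb2 : (v (j:ℕ):ℤ) ≤ (n:ℤ) := by exact_mod_cast hb.2
    simp only [hA] at hx
    split_ifs at hx with h1 h2
    · injection hx with hx
      subst hx
      exact ⟨by omega, by rw [abs_of_pos hb1]; exact hb2⟩
    · injection hx with hx
      subst hx
      exact ⟨by omega, by rw [abs_neg, abs_of_pos hb1]; exact hb2⟩
  · -- uniqueness
    intro x hx
    have hmul : m * (2 * s0) = 2 * n := by rw [← hmn]; ring
    have hdiv : (m : ℤ) * ((2 * s0 : ℕ) : ℤ) / 2 = (n : ℤ) := by
      have : (m : ℤ) * ((2 * s0 : ℕ) : ℤ) = 2 * n := by exact_mod_cast hmul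
      omega
    rw [SMRvalue, if_neg (by omega), hdiv] at hx
    obtain ⟨hx0, hxn⟩ := hx
    -- surjectivity of v
    have hsurj : ∀ y, 1 ≤ y → y ≤ n → ∃ j, j < n ∧ v j = y := by
      intro y hy1 hy2
      have hsub : (range n).image v ⊆ Finset.Icc 1 n := by
        intro z hz
        simp only [Finset.mem_image, Finset.mem_range] at hz
        obtain ⟨j, hj, rfl⟩ := hz
        simp only [Finset.mem_Icc]
        exact hv1 j hj
      have hcard : ((range n).image v).card = n := by
        rw [Finset.card_image_of_injOn, Finset.card_range]
        intro j hj j' hj' h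
        exact hvinj j j' (by simpa using hj) (by simpa using hj') h
      have : (range n).image v = Finset.Icc 1 n := by
        apply Finset.eq_of_subset_of_card_le hsub
        rw [hcard, Nat.card_Icc]
        omega
      have hy : y ∈ (range n).image v := by
        rw [this]; simp only [Finset.mem_Icc]; exact ⟨hy1, hy2⟩
      simpa only [Finset.mem_image, Finset.mem_range] using hy
    rcases lt_or_gt_of_ne hx0 with hneg | hpos
    · -- x < 0 : placed via q
      obtain ⟨j, hj, hvj⟩ := hsurj (-x).toNat (by omega) (by rw [abs_of_neg hneg] at hxn; omega)
      have hvx : (v j : ℤ) = -x := by rw [hvj]; omega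
      refine ⟨(⟨q j, hqm j hj⟩, ⟨j, hj⟩), ?_, ?_⟩
      · show (if p j = q j then some ((v j : ℤ)) else
            if q j = q j then some (-(v j : ℤ)) else none) = some x
        rw [if_neg (hpq j hj), if_pos rfl, hvx]
        norm_num
      · rintro ⟨i', j'⟩ hij
        show (⟨i', j'⟩ : Fin m × Fin n) = _
        simp only [hA] at hij
        split_ifs at hij with h1 h2
        · injection hij with hij
          exfalso
          have := hvpos j'
          omega
        · injection hij with hij
          have hv' : (v (j':ℕ) : ℤ) = -x := by omega
          have : v (j':ℕ) = v j := by
            have : (v (j':ℕ) : ℤ) = (v j : ℤ) := by rw [hv', hvx]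
            exact_mod_cast this
          have hjj : (j':ℕ) = j := hvinj _ _ j'.2 hj this
          have hii : (i':ℕ) = q j := by rw [← h2, hjj]
          exact Prod.ext (Fin.ext hii) (Fin.ext hjj)
    · -- x > 0 : placed via p
      obtain ⟨j, hj, hvj⟩ := hsurj x.toNat (by omega) (by rw [abs_of_pos hpos] at hxn; omega)
      have hvx : (v j : ℤ) = x := by rw [hvj]; omega
      refine ⟨(⟨p j, hpm j hj⟩, ⟨j, hj⟩), ?_, ?_⟩
      · show (if p j = p j then some ((v j : ℤ)) else
            if q j = p j then some (-(v j : ℤ)) else none) = some x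
        rw [if_pos rfl, hvx]
      · rintro ⟨i', j'⟩ hij
        show (⟨i', j'⟩ : Fin m × Fin n) = _
        simp only [hA] at hij
        split_ifs at hij with h1 h2
        · injection hij with hij
          have : v (j':ℕ) = v j := by
            have : (v (j':ℕ) : ℤ) = (v j : ℤ) := by rw [hij, hvx]
            exact_mod_cast this
          have hjj : (j':ℕ) = j := hvinj _ _ j'.2 hj this
          have hii : (i':ℕ) = p j := by rw [← h1, hjj]
          exact Prod.ext (Fin.ext hii) (Fin.ext hjj)
        · injection hij with hij
          exfalso
          have := hvpos j'
          omega
  · -- row sums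
    intro i
    have : ∀ j : Fin n, (A i j).getD 0 =
        (if p (j:ℕ) = (i:ℕ) then ((v (j:ℕ) : ℤ)) else 0) +
        (if q (j:ℕ) = (i:ℕ) then (-(v (j:ℕ) : ℤ)) else 0) := hgetD i
    calc ∑ j, (A i j).getD 0
        = (∑ j : Fin n, if p (j:ℕ) = (i:ℕ) then ((v (j:ℕ) : ℤ)) else 0) +
          (∑ j : Fin n, if q (j:ℕ) = (i:ℕ) then (-(v (j:ℕ) : ℤ)) else 0) := by
          rw [← Finset.sum_add_distrib]
          exact Finset.sum_congr rfl (fun j _ => this j)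
      _ = (((range n).filter (fun j => p j = (i:ℕ))).sum (fun j => (v j : ℤ))) +
          (((range n).filter (fun j => q j = (i:ℕ))).sum (fun j => -(v j : ℤ))) := by
          rw [sumFin (fun j => p j = (i:ℕ)) (fun j => ((v j : ℤ))), sumFin (fun j => q j = (i:ℕ)) (fun j => (-(v j : ℤ)))]
      _ = 0 := by
          rw [show (((range n).filter (fun j => q j = (i:ℕ))).sum (fun j => -(v j : ℤ))) = -(((range n).filter (fun j => q j = (i:ℕ))).sum (fun j => (v j : ℤ))) by simp]
          have h1 : (((range n).filter (fun j => p j = (i:ℕ))).sum (fun j => (v j : ℤ))) =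
              ((((range n).filter (fun j => p j = (i:ℕ))).sum v : ℕ) : ℤ) := by
            push_cast; rfl
          have h2 : (((range n).filter (fun j => q j = (i:ℕ))).sum (fun j => (v j : ℤ))) =
              ((((range n).filter (fun j => q j = (i:ℕ))).sum v : ℕ) : ℤ) := by
            push_cast; rfl
          rw [h1, h2, hsum _ i.2]
          ring
  · -- column sums
    intro j
    have heq : ∀ i : Fin m, (p (j:ℕ) = (i:ℕ)) ↔ (i = ⟨p (j:ℕ), hpm _ j.2⟩) := by
      intro i; rw [Fin.ext_iff]; exact eq_comm
    have heq' : ∀ i : Fin m, (q (j:ℕ) = (i:ℕ)) ↔ (i = ⟨q (j:ℕ), hqm _ j.2⟩) := by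
      intro i; rw [Fin.ext_iff]; exact eq_comm
    calc ∑ i, (A i j).getD 0
        = (∑ i : Fin m, if i = ⟨p (j:ℕ), hpm _ j.2⟩ then ((v (j:ℕ) : ℤ)) else 0) +
          (∑ i : Fin m, if i = ⟨q (j:ℕ), hqm _ j.2⟩ then (-(v (j:ℕ) : ℤ)) else 0) := by
          rw [← Finset.sum_add_distrib]
          refine Finset.sum_congr rfl (fun i _ => ?_)
          rw [hgetD i j]
          congr 1
          · rw [if_congr (heq i) rfl rfl]
          · rw [if_congr (heq' i) rfl rfl]
      _ = 0 := by
          rw [Finset.sum_ite_eq' univ _ (fun _ => ((v (j:ℕ):ℤ))),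
              Finset.sum_ite_eq' univ _ (fun _ => (-(v (j:ℕ):ℤ)))]
          simp
  · -- shiftable rows
    intro i
    have h1 : (univ : Finset (Fin n)).filter (fun j : Fin n => 0 < (A i j).getD 0) =
        (univ : Finset (Fin n)).filter (fun j : Fin n => p (j:ℕ) = (i:ℕ)) := by
      apply Finset.filter_congr
      intro j _
      rw [hgetD i j]
      have := hvpos j
      have hne := hpq (j:ℕ) j.2
      constructor
      · intro h
        by_contra hp
        rw [if_neg hp] at h
        split_ifs at h <;> omega
      · intro h
        rw [if_pos h, if_neg (fun h2 => hne (h.trans h2.symm))]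
        omega
    have h2 : (univ : Finset (Fin n)).filter (fun j : Fin n => (A i j).getD 0 < 0) =
        (univ : Finset (Fin n)).filter (fun j : Fin n => q (j:ℕ) = (i:ℕ)) := by
      apply Finset.filter_congr
      intro j _
      rw [hgetD i j]
      have := hvpos j
      have hne := hpq (j:ℕ) j.2
      constructor
      · intro h
        by_contra hq
        rw [if_neg hq] at h
        split_ifs at h <;> omega
      · intro h
        rw [if_pos h, if_neg (fun h2 => hne (h2.trans h.symm))]
        omega
    rw [h1, h2, cardFin (fun j => p j = (i:ℕ)), cardFin (fun j => q j = (i:ℕ)), hcp _ i.2, hcq _ i.2]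
  · -- shiftable columns
    intro j
    have h1 : (univ : Finset (Fin m)).filter (fun i : Fin m => 0 < (A i j).getD 0) =
        {⟨p (j:ℕ), hpm _ j.2⟩} := by
      ext i
      simp only [Finset.mem_filter, Finset.mem_univ, true_and, Finset.mem_singleton]
      rw [hgetD i j]
      have := hvpos j
      have hne := hpq (j:ℕ) j.2
      constructor
      · intro h
        rw [Fin.ext_iff]
        by_contra hp
        rw [if_neg (fun hh : p (j:ℕ) = (i:ℕ) => hp hh.symm)] at h
        split_ifs at h <;> omega
      · intro h
        subst h
        rw [if_pos rfl, if_neg (fun h2 => hne h2.symm)]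
        omega
    have h2 : (univ : Finset (Fin m)).filter (fun i : Fin m => (A i j).getD 0 < 0) =
        {⟨q (j:ℕ), hqm _ j.2⟩} := by
      ext i
      simp only [Finset.mem_filter, Finset.mem_univ, true_and, Finset.mem_singleton]
      rw [hgetD i j]
      have := hvpos j
      have hne := hpq (j:ℕ) j.2
      constructor
      · intro h
        rw [Fin.ext_iff]
        by_contra hq
        rw [if_neg (fun hh : q (j:ℕ) = (i:ℕ) => hq hh.symm)] at h
        split_ifs at h <;> omega
      · intro h
        subst h
        rw [if_neg (fun h2 => hne h2), if_pos rfl]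
        omega
    rw [h1, h2]
    simp


def pf (a b j : ℕ) : ℕ :=
  if j < 4*b+2 then j
  else if j < 2*(4*b+2) then j - (4*b+2)
  else if j < 3*(4*b+2) then j - 2*(4*b+2)
  else 2*(((j - 3*(4*b+2))/4) / (a-1)) +
    (if (j - 3*(4*b+2)) % 4 = 0 ∨ (j - 3*(4*b+2)) % 4 = 3 then 0 else 1)

def qf (a b j : ℕ) : ℕ :=
  if j < 3*(4*b+2) then (if pf a b j < 2 then pf a b j + 4*b else pf a b j - 2)
  else 2*(((j - 3*(4*b+2))/4) / (a-1)) +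
    (if (j - 3*(4*b+2)) % 4 = 0 ∨ (j - 3*(4*b+2)) % 4 = 3 then 1 else 0)

def vf (a b j : ℕ) : ℕ :=
  if j < 4*b+2 then j + 1
  else if j < 2*(4*b+2) then (if j - (4*b+2) < 2*b+2 then j + (2*b+1) else j - (2*b+1))
  else if j < 3*(4*b+2) then
    2*(4*b+2) + (if j - 2*(4*b+2) < 2*b+2
      then 4*b+1 - 2*((j - 2*(4*b+2))/2) - (j - 2*(4*b+2))
      else 8*b+3 - 2*((j - 2*(4*b+2))/2) - (j - 2*(4*b+2))) + 1
  else j + 1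

lemma blockFacts (c b j : ℕ) (h3 : 3*(4*b+2) ≤ j) (hj : j < (2*c+3)*(4*b+2)) :
    0 < c ∧ j - 3*(4*b+2) < c*(8*b+4) ∧ ((j - 3*(4*b+2))/4) < (2*b+1)*c := by
  have hns : (2*c+3)*(4*b+2) = 3*(4*b+2) + c*(8*b+4) := by ring
  have hc : 0 < c := by
    rcases Nat.eq_zero_or_pos c with h | h
    · subst h; omega
    · exact h
  have h4 : c*(8*b+4) = 4*((2*b+1)*c) := by ring
  exact ⟨hc, by omega, by omega⟩

lemma pq_props (c b : ℕ) (hb : 1 ≤ b) (j : ℕ) (hj : j < (2*c+3)*(4*b+2)) :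
    pf (c+1) b j < 4*b+2 ∧ qf (c+1) b j < 4*b+2 ∧ pf (c+1) b j ≠ qf (c+1) b j := by
  by_cases h3 : j < 3*(4*b+2)
  · simp only [pf, qf, Nat.add_sub_cancel, if_pos h3]
    split_ifs <;> omega
  · obtain ⟨hc, hk, hw⟩ := blockFacts c b j (by omega) hj
    have hu : (j - 3*(4*b+2))/4/c < 2*b+1 := (Nat.div_lt_iff_lt_mul hc).2 hw
    simp only [pf, qf, Nat.add_sub_cancel, if_neg h3]
    split_ifs <;> omega

lemma vf_bounds (c b : ℕ) (j : ℕ) (hj : j < (2*c+3)*(4*b+2)) :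
    1 ≤ vf (c+1) b j ∧ vf (c+1) b j ≤ (2*c+3)*(4*b+2) := by
  have hns : (2*c+3)*(4*b+2) = 3*(4*b+2) + c*(8*b+4) := by ring
  simp only [vf]
  split_ifs <;> omega

lemma vf_inj (c b : ℕ) (j j' : ℕ) (hj : j < (2*c+3)*(4*b+2)) (hj' : j' < (2*c+3)*(4*b+2))
    (h : vf (c+1) b j = vf (c+1) b j') : j = j' := by
  simp only [vf] at h
  split_ifs at h <;> omega

def shapeSet (b c X x r0 r1 : ℕ) : Finset ℕ :=
  ({x, (4*b+2)+x, 2*(4*b+2)+x} : Finset ℕ) ∪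
  ((range c).image (fun l => 3*(4*b+2) + 4*(X + l) + r0)) ∪
  ((range c).image (fun l => 3*(4*b+2) + 4*(X + l) + r1))

lemma shape_disj1 (b c X x r0 r1 : ℕ) (hx : x < 4*b+2) (hr0 : r0 < 4) (hr1 : r1 < 4)
    (hne : r0 ≠ r1) :
    Disjoint (({x, (4*b+2)+x, 2*(4*b+2)+x} : Finset ℕ) ∪
      ((range c).image (fun l => 3*(4*b+2) + 4*(X + l) + r0)))
      ((range c).image (fun l => 3*(4*b+2) + 4*(X + l) + r1)) := by
  rw [Finset.disjoint_left]
  intro t ht ht'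
  simp only [Finset.mem_union, Finset.mem_insert, Finset.mem_singleton,
    Finset.mem_image, Finset.mem_range] at ht ht'
  obtain ⟨l', hl', hteq⟩ := ht'
  rcases ht with ((h|h)|h) | ⟨l, hl, heq⟩ <;> omega

lemma shape_disj2 (b c X x r0 : ℕ) (hx : x < 4*b+2) :
    Disjoint (({x, (4*b+2)+x, 2*(4*b+2)+x} : Finset ℕ))
      ((range c).image (fun l => 3*(4*b+2) + 4*(X + l) + r0)) := by
  rw [Finset.disjoint_left]
  intro t ht ht'
  simp only [Finset.mem_insert, Finset.mem_singleton,
    Finset.mem_image, Finset.mem_range] at ht ht'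
  obtain ⟨l', hl', hteq⟩ := ht'
  rcases ht with (h|h)|h <;> omega

lemma shape_card (b c X x r0 r1 : ℕ) (hx : x < 4*b+2) (hr0 : r0 < 4) (hr1 : r1 < 4)
    (hne : r0 ≠ r1) : (shapeSet b c X x r0 r1).card = 2*c+3 := by
  rw [shapeSet, Finset.card_union_of_disjoint (shape_disj1 b c X x r0 r1 hx hr0 hr1 hne),
    Finset.card_union_of_disjoint (shape_disj2 b c X x r0 hx),
    Finset.card_image_of_injOn (fun l _ l' _ h => by omega),
    Finset.card_image_of_injOn (fun l _ l' _ h => by omega), Finset.card_range]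
  rw [Finset.card_insert_of_notMem (by
      simp only [Finset.mem_insert, Finset.mem_singleton]; omega),
    Finset.card_insert_of_notMem (by simp only [Finset.mem_singleton]; omega),
    Finset.card_singleton]
  ring

lemma shape_sum (b c X x r0 r1 : ℕ) (hx : x < 4*b+2) (hr0 : r0 < 4) (hr1 : r1 < 4)
    (hne : r0 ≠ r1) (v : ℕ → ℕ) (hv : ∀ j, 3*(4*b+2) ≤ j → v j = j + 1) :
    (shapeSet b c X x r0 r1).sum v =
      v x + v ((4*b+2)+x) + v (2*(4*b+2)+x) +
      ((range c).sum (fun l => 2*(3*(4*b+2)+4*(X+l)) + (r0 + r1) + 2)) := by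
  rw [shapeSet, Finset.sum_union (shape_disj1 b c X x r0 r1 hx hr0 hr1 hne),
    Finset.sum_union (shape_disj2 b c X x r0 hx),
    Finset.sum_image (fun l _ l' _ h => by omega),
    Finset.sum_image (fun l _ l' _ h => by omega)]
  have hcore : ({x, (4*b+2)+x, 2*(4*b+2)+x} : Finset ℕ).sum v =
      v x + v ((4*b+2)+x) + v (2*(4*b+2)+x) := by
    rw [Finset.sum_insert (by
        simp only [Finset.mem_insert, Finset.mem_singleton]; omega),
      Finset.sum_insert (by simp only [Finset.mem_singleton]; omega),
      Finset.sum_singleton]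
    ring
  rw [hcore]
  have h0 : ((range c).sum (fun l => v (3*(4*b+2) + 4*(X + l) + r0))) =
      (range c).sum (fun l => 3*(4*b+2) + 4*(X + l) + r0 + 1) :=
    Finset.sum_congr rfl (fun l _ => hv _ (by omega))
  have h1 : ((range c).sum (fun l => v (3*(4*b+2) + 4*(X + l) + r1))) =
      (range c).sum (fun l => 3*(4*b+2) + 4*(X + l) + r1 + 1) :=
    Finset.sum_congr rfl (fun l _ => hv _ (by omega))
  rw [h0, h1, add_assoc, ← Finset.sum_add_distrib]
  congr 1
  exact Finset.sum_congr rfl (fun l _ => by omega)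

lemma pf_filter (c b i : ℕ) (hi : i < 4*b+2) :
    (range ((2*c+3)*(4*b+2))).filter (fun j => pf (c+1) b j = i) =
      shapeSet b c (c*(i/2)) i (i % 2) (3 - i % 2) := by
  have hns : (2*c+3)*(4*b+2) = 3*(4*b+2) + c*(8*b+4) := by ring
  ext j
  simp only [shapeSet, Finset.mem_filter, Finset.mem_range, Finset.mem_union,
    Finset.mem_insert, Finset.mem_singleton, Finset.mem_image]
  constructor
  · rintro ⟨hj, hp⟩
    by_cases h3 : j < 3*(4*b+2)
    · left; left
      simp only [pf, Nat.add_sub_cancel] at hp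
      split_ifs at hp <;> omega
    · obtain ⟨hc, hk, hw⟩ := blockFacts c b j (by omega) hj
      simp only [pf, Nat.add_sub_cancel, if_neg (show ¬ j < 4*b+2 by omega),
        if_neg (show ¬ j < 2*(4*b+2) by omega), if_neg h3] at hp
      have hwc := Nat.div_add_mod ((j - 3*(4*b+2))/4) c
      have hlc : (j - 3*(4*b+2))/4 % c < c := Nat.mod_lt _ hc
      have hk4 := Nat.div_add_mod (j - 3*(4*b+2)) 4
      by_cases hr : (j - 3*(4*b+2)) % 4 = 0 ∨ (j - 3*(4*b+2)) % 4 = 3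
      · rw [if_pos hr] at hp
        have hu2 : (j - 3*(4*b+2))/4/c = i/2 ∧ i % 2 = 0 := by omega
        rcases hr with hr0 | hr3
        · refine Or.inl (Or.inr ⟨(j - 3*(4*b+2))/4 % c, hlc, ?_⟩)
          rw [hu2.2, ← hu2.1]
          omega
        · refine Or.inr ⟨(j - 3*(4*b+2))/4 % c, hlc, ?_⟩
          rw [show 3 - i % 2 = 3 by omega, ← hu2.1]
          omega
      · rw [if_neg hr] at hp
        have hu2 : (j - 3*(4*b+2))/4/c = i/2 ∧ i % 2 = 1 := by omega
        have hr12 : (j - 3*(4*b+2)) % 4 = 1 ∨ (j - 3*(4*b+2)) % 4 = 2 := by omega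
        rcases hr12 with hr1 | hr2
        · refine Or.inl (Or.inr ⟨(j - 3*(4*b+2))/4 % c, hlc, ?_⟩)
          rw [hu2.2, ← hu2.1]
          omega
        · refine Or.inr ⟨(j - 3*(4*b+2))/4 % c, hlc, ?_⟩
          rw [show 3 - i % 2 = 2 by omega, ← hu2.1]
          omega
  · have hblock : ∀ r0, r0 < 4 → ∀ l, l < c →
        3*(4*b+2) + 4*(c*(i/2) + l) + r0 < (2*c+3)*(4*b+2) ∧
        pf (c+1) b (3*(4*b+2) + 4*(c*(i/2) + l) + r0) =
          2*(i/2) + (if r0 = 0 ∨ r0 = 3 then 0 else 1) := by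
      intro r0 hr0 l hl
      have hc : 0 < c := by omega
      have hi2 : i/2 ≤ 2*b := by omega
      have hmul : c*(i/2) ≤ c*(2*b) := Nat.mul_le_mul_left c hi2
      have hr2 : c*(8*b+4) = 4*(c*(2*b)) + 4*c := by ring
      constructor
      · omega
      · have h3' : ¬ (3*(4*b+2) + 4*(c*(i/2) + l) + r0 < 3*(4*b+2)) := by omega
        simp only [pf, Nat.add_sub_cancel, if_neg (by omega : ¬ (3*(4*b+2) + 4*(c*(i/2) + l) + r0 < 4*b+2)),
          if_neg (by omega : ¬ (3*(4*b+2) + 4*(c*(i/2) + l) + r0 < 2*(4*b+2))),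
          if_neg (by omega : ¬ (3*(4*b+2) + 4*(c*(i/2) + l) + r0 < 3*(4*b+2)))]
        have hkk : (3*(4*b+2) + 4*(c*(i/2) + l) + r0) - 3*(4*b+2) = 4*(c*(i/2) + l) + r0 := by omega
        rw [hkk]
        have hdiv4 : (4*(c*(i/2) + l) + r0)/4 = c*(i/2) + l := by omega
        have hmod4 : (4*(c*(i/2) + l) + r0) % 4 = r0 := by omega
        rw [hdiv4, hmod4, Nat.mul_add_div hc, Nat.div_eq_of_lt hl, add_zero]
    rintro ((hcore | ⟨l, hl, rfl⟩) | ⟨l, hl, rfl⟩)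
    · rcases hcore with rfl | rfl | rfl <;>
        (constructor
         · omega
         · simp only [pf, Nat.add_sub_cancel]; split_ifs <;> omega)
    · obtain ⟨hlt, hpf⟩ := hblock (i % 2) (by omega) l hl
      refine ⟨hlt, ?_⟩
      rw [hpf]
      split_ifs <;> omega
    · obtain ⟨hlt, hpf⟩ := hblock (3 - i % 2) (by omega) l hl
      refine ⟨hlt, ?_⟩
      rw [hpf]
      split_ifs <;> omega

lemma qf_filter (c b i : ℕ) (hb : 1 ≤ b) (hi : i < 4*b+2) :
    (range ((2*c+3)*(4*b+2))).filter (fun j => qf (c+1) b j = i) =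
      shapeSet b c (c*(i/2)) (if i < 4*b then i+2 else i - 4*b) (1 - i % 2) (2 + i % 2) := by
  have hns : (2*c+3)*(4*b+2) = 3*(4*b+2) + c*(8*b+4) := by ring
  ext j
  simp only [shapeSet, Finset.mem_filter, Finset.mem_range, Finset.mem_union,
    Finset.mem_insert, Finset.mem_singleton, Finset.mem_image]
  constructor
  · rintro ⟨hj, hp⟩
    by_cases h3 : j < 3*(4*b+2)
    · left; left
      simp only [qf, pf, Nat.add_sub_cancel, if_pos h3] at hp
      split_ifs at hp <;> split_ifs <;> omega
    · obtain ⟨hc, hk, hw⟩ := blockFacts c b j (by omega) hj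
      simp only [qf, Nat.add_sub_cancel, if_neg h3] at hp
      have hwc := Nat.div_add_mod ((j - 3*(4*b+2))/4) c
      have hlc : (j - 3*(4*b+2))/4 % c < c := Nat.mod_lt _ hc
      have hk4 := Nat.div_add_mod (j - 3*(4*b+2)) 4
      by_cases hr : (j - 3*(4*b+2)) % 4 = 0 ∨ (j - 3*(4*b+2)) % 4 = 3
      · rw [if_pos hr] at hp
        have hu2 : (j - 3*(4*b+2))/4/c = i/2 ∧ i % 2 = 1 := by omega
        rcases hr with hr0 | hr3
        · refine Or.inl (Or.inr ⟨(j - 3*(4*b+2))/4 % c, hlc, ?_⟩)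
          rw [show 1 - i % 2 = 0 by omega, ← hu2.1]
          omega
        · refine Or.inr ⟨(j - 3*(4*b+2))/4 % c, hlc, ?_⟩
          rw [show 2 + i % 2 = 3 by omega, ← hu2.1]
          omega
      · rw [if_neg hr] at hp
        have hu2 : (j - 3*(4*b+2))/4/c = i/2 ∧ i % 2 = 0 := by omega
        have hr12 : (j - 3*(4*b+2)) % 4 = 1 ∨ (j - 3*(4*b+2)) % 4 = 2 := by omega
        rcases hr12 with hr1 | hr2
        · refine Or.inl (Or.inr ⟨(j - 3*(4*b+2))/4 % c, hlc, ?_⟩)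
          rw [show 1 - i % 2 = 1 by omega, ← hu2.1]
          omega
        · refine Or.inr ⟨(j - 3*(4*b+2))/4 % c, hlc, ?_⟩
          rw [show 2 + i % 2 = 2 by omega, ← hu2.1]
          omega
  · have hblock : ∀ r0, r0 < 4 → ∀ l, l < c →
        3*(4*b+2) + 4*(c*(i/2) + l) + r0 < (2*c+3)*(4*b+2) ∧
        qf (c+1) b (3*(4*b+2) + 4*(c*(i/2) + l) + r0) =
          2*(i/2) + (if r0 = 0 ∨ r0 = 3 then 1 else 0) := by
      intro r0 hr0 l hl
      have hc : 0 < c := by omega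
      have hi2 : i/2 ≤ 2*b := by omega
      have hmul : c*(i/2) ≤ c*(2*b) := Nat.mul_le_mul_left c hi2
      have hr2 : c*(8*b+4) = 4*(c*(2*b)) + 4*c := by ring
      constructor
      · omega
      · simp only [qf, Nat.add_sub_cancel,
          if_neg (by omega : ¬ (3*(4*b+2) + 4*(c*(i/2) + l) + r0 < 3*(4*b+2)))]
        have hkk : (3*(4*b+2) + 4*(c*(i/2) + l) + r0) - 3*(4*b+2) = 4*(c*(i/2) + l) + r0 := by
          omega
        rw [hkk]
        have hdiv4 : (4*(c*(i/2) + l) + r0)/4 = c*(i/2) + l := by omega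
        have hmod4 : (4*(c*(i/2) + l) + r0) % 4 = r0 := by omega
        rw [hdiv4, hmod4, Nat.mul_add_div hc, Nat.div_eq_of_lt hl, add_zero]
    rintro ((hcore | ⟨l, hl, rfl⟩) | ⟨l, hl, rfl⟩)
    · rcases hcore with rfl | rfl | rfl <;>
        (constructor
         · split_ifs <;> omega
         · simp only [qf, pf, Nat.add_sub_cancel]
           split_ifs <;> omega)
    · obtain ⟨hlt, hpf⟩ := hblock (1 - i % 2) (by omega) l hl
      refine ⟨hlt, ?_⟩
      rw [hpf]
      split_ifs <;> omega
    · obtain ⟨hlt, hpf⟩ := hblock (2 + i % 2) (by omega) l hl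
      refine ⟨hlt, ?_⟩
      rw [hpf]
      split_ifs <;> omega

lemma vf_block (c b j : ℕ) (h : 3*(4*b+2) ≤ j) : vf (c+1) b j = j + 1 := by
  simp only [vf]
  rw [if_neg (by omega), if_neg (by omega), if_neg (by omega)]

lemma core_sum (c b t : ℕ) (ht : t < 4*b+2) :
    vf (c+1) b t + vf (c+1) b ((4*b+2)+t) + vf (c+1) b (2*(4*b+2)+t) = 18*b+10 + t % 2 := by
  simp only [vf]
  split_ifs <;> omega

lemma pq_sum (c b i : ℕ) (hb : 1 ≤ b) (hi : i < 4*b+2) :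
    ((range ((2*c+3)*(4*b+2))).filter (fun j => pf (c+1) b j = i)).sum (vf (c+1) b) =
    ((range ((2*c+3)*(4*b+2))).filter (fun j => qf (c+1) b j = i)).sum (vf (c+1) b) := by
  rw [pf_filter c b i hi, qf_filter c b i hb hi,
    shape_sum b c (c*(i/2)) i (i % 2) (3 - i % 2) hi (by omega) (by omega) (by omega)
      (vf (c+1) b) (vf_block c b),
    shape_sum b c (c*(i/2)) (if i < 4*b then i+2 else i - 4*b) (1 - i % 2) (2 + i % 2)
      (by split_ifs <;> omega) (by omega) (by omega) (by omega)
      (vf (c+1) b) (vf_block c b)]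
  have hS : (range c).sum (fun l => 2*(3*(4*b+2)+4*(c*(i/2)+l)) + (1 - i % 2 + (2 + i % 2)) + 2) =
      (range c).sum (fun l => 2*(3*(4*b+2)+4*(c*(i/2)+l)) + (i % 2 + (3 - i % 2)) + 2) :=
    Finset.sum_congr rfl (fun l _ => by omega)
  rw [hS]
  have h1 := core_sum c b i hi
  have h2 := core_sum c b (if i < 4*b then i+2 else i - 4*b) (by split_ifs <;> omega)
  have hpar : (if i < 4*b then i+2 else i - 4*b) % 2 = i % 2 := by split_ifs <;> omega
  omega


theorem stmt_16 (a b : ℕ) (ha : 1 ≤ a) (hb : 1 ≤ b) :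
    ShiftableSMR (4 * b + 2) ((2 * a + 1) * (4 * b + 2)) (4 * a + 2) 2 := by
  obtain ⟨c, rfl⟩ : ∃ c, a = c + 1 := ⟨a - 1, by omega⟩
  have e1 : (2 * (c+1) + 1) * (4 * b + 2) = (2*c+3)*(4*b+2) := by ring
  have e2 : 4 * (c+1) + 2 = 2 * (2*c+3) := by ring
  rw [e1, e2]
  exact buildSMR (4*b+2) ((2*c+3)*(4*b+2)) (2*c+3) (by omega) (by ring)
    (pf (c+1) b) (qf (c+1) b) (vf (c+1) b)
    (fun j hj => (pq_props c b hb j hj).1)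
    (fun j hj => (pq_props c b hb j hj).2.1)
    (fun j hj => (pq_props c b hb j hj).2.2)
    (fun j hj => vf_bounds c b j hj)
    (fun j j' hj hj' h => vf_inj c b j j' hj hj' h)
    (fun i hi => by
      rw [pf_filter c b i hi]
      exact shape_card b c (c*(i/2)) i (i % 2) (3 - i % 2) hi (by omega) (by omega) (by omega))
    (fun i hi => by
      rw [qf_filter c b i hb hi]
      exact shape_card b c (c*(i/2)) (if i < 4*b then i+2 else i - 4*b) (1 - i % 2) (2 + i % 2)
        (by split_ifs <;> omega) (by omega) (by omega) (by omega))
    (fun i hi => pq_sum c b i hb hi)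
end
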